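/- arXiv:1103.4117 — 4 statements merged into one kernel-verified Lean document; each statement's English description precedes it below -/
import Mathlib

section
/- Let b ≥ 0 and let B ≡ b be the constant function on (0,1). Then: (i) if b = 0 or b = 1, then K(B) = ∅; (ii) if b ∉ {0, 1}, then K(B) = { i·(1/(2√b))·log|(√b + 1)/(√b − 1)| + (π/√b)·(n + c) : n ∈ ℤ }, where c = 0 if b > 1 and c = 1/2 if b < 1. -/
/-!
For `B ≡ b`, put `μ = √b κ`. For `ν = ±iμ` the quantity `(y' - ν y) e^{ν x}` is Lipschitz on
`[0,1]` with a.e. vanishing derivative, hence constant; the two resulting identities force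
`y = y(0) cos (μ x)` whenever `y'(0) = 0`. The boundary condition at `1` then reads
`cos μ + i √b sin μ = 0`, i.e. `(√b + 1) e^{2iμ} = √b - 1`. This has no solution for `b = 0`
(where `μ = 0`) or `b = 1`; otherwise `(√b - 1)/(√b + 1)` is a nonzero real number whose argument is
`0` for `b > 1` and `π` for `b < 1`, and taking logarithms gives the lattice of quasi-eigenvalues.
-/

open MeasureTheory Set Complex intervalIntegral

noncomputable section

/-- The Lebesgue measure restricted to the interval `(0,1)`. -/
def mu01 : Measure ℝ := volume.restrict (Set.Ioo 0 1)

/-- `y` (with derivative `y'`) is a `W^{2,∞}` solution of `y'' + z² B y = 0` on `(0,1)`: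
`y ∈ C¹[0,1]`, `y'` is Lipschitz (so `y'' ∈ L^∞` exists a.e.), and the equation holds a.e. -/
def IsW2Sol (B : ℝ → ℂ) (z : ℂ) (y y' : ℝ → ℂ) : Prop :=
  (∀ x ∈ Set.Icc (0:ℝ) 1, HasDerivWithinAt y (y' x) (Set.Icc (0:ℝ) 1) x) ∧
  (∃ L : NNReal, LipschitzOnWith L y' (Set.Icc (0:ℝ) 1)) ∧
  (∀ᵐ x ∂mu01, HasDerivAt y' (-(z^2) * B x * y x) x)

/-- `κ` is a quasi-eigenvalue of the structure `B`: `κ ≠ 0` and there is a nonzero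
`W^{2,∞}` solution of `y'' + κ² B y = 0` with `y'(0) = 0` and `κ y(1) = i y'(1)`. -/
def QuasiEigen (B : ℝ → ℂ) (κ : ℂ) : Prop :=
  κ ≠ 0 ∧ ∃ y y' : ℝ → ℂ, IsW2Sol B κ y y' ∧
    (∃ x ∈ Set.Icc (0:ℝ) 1, y x ≠ 0) ∧ y' 0 = 0 ∧ κ * y 1 = Complex.I * y' 1

/-- `y` is the solution `φ(·, z; B)` (normalized by `y(0)=1`, `y'(0)=0`). -/
def IsPhi (B : ℝ → ℂ) (z : ℂ) (y y' : ℝ → ℂ) : Prop :=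
  IsW2Sol B z y y' ∧ y 0 = 1 ∧ y' 0 = 0

/-- `y` is the solution `ψ(·, z; B)` (normalized by `y(0)=0`, `y'(0)=1`). -/
def IsPsi (B : ℝ → ℂ) (z : ℂ) (y y' : ℝ → ℂ) : Prop :=
  IsW2Sol B z y y' ∧ y 0 = 0 ∧ y' 0 = 1

/-- Membership of a real-valued structure in the admissible family `Ad`:
`B ∈ L^∞((0,1);ℝ)` with `b1 ≤ B(x) ≤ b2` a.e. on `(0,1)`. -/
def InAd (b1 b2 : ℝ) (B : ℝ → ℝ) : Prop :=
  AEStronglyMeasurable B mu01 ∧ ∀ᵐ x ∂mu01, b1 ≤ B x ∧ B x ≤ b2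

/-- The set `K(Ad)` of all quasi-eigenvalues of admissible structures. -/
def KAd (b1 b2 : ℝ) : Set ℂ :=
  {κ | ∃ B : ℝ → ℝ, InAd b1 b2 B ∧ QuasiEigen (fun x => ((B x : ℝ) : ℂ)) κ}

lemma exists_lipschitzOnWith_of_hasDerivWithinAt {E : Type*} [NormedAddCommGroup E]
    [NormedSpace ℝ E] {f f' : ℝ → E} {a b : ℝ}
    (hf : ∀ x ∈ Icc a b, HasDerivWithinAt f (f' x) (Icc a b) x) (hf' : ContinuousOn f' (Icc a b)) :
    ∃ K, LipschitzOnWith K f (Icc a b) := by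
  obtain ⟨C, hC⟩ := isCompact_Icc.exists_bound_of_continuousOn hf'
  refine ⟨C.toNNReal, (convex_Icc a b).lipschitzOnWith_of_nnnorm_hasDerivWithin_le hf
    fun x hx => ?_⟩
  rw [← NNReal.coe_le_coe, coe_nnnorm, Real.coe_toNNReal']
  exact (hC x hx).trans (le_max_left _ _)

lemma hasDerivAt_exp_mul_ofReal (ν : ℂ) (t : ℝ) :
    HasDerivAt (fun u : ℝ => exp (ν * u)) (ν * exp (ν * t)) t := by
  simpa [mul_comm] using ((hasDerivAt_id (t : ℂ)).const_mul ν).cexp.comp_ofReal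

lemma hasDerivAt_cos_mul_ofReal (ν : ℂ) (t : ℝ) :
    HasDerivAt (fun u : ℝ => cos (ν * u)) (-ν * sin (ν * t)) t := by
  simpa [mul_comm] using ((hasDerivAt_id (t : ℂ)).const_mul ν).ccos.comp_ofReal

lemma hasDerivAt_sin_mul_ofReal (ν : ℂ) (t : ℝ) :
    HasDerivAt (fun u : ℝ => sin (ν * u)) (ν * cos (ν * t)) t := by
  simpa [mul_comm] using ((hasDerivAt_id (t : ℂ)).const_mul ν).csin.comp_ofReal

namespace IsW2Sol

variable {B : ℝ → ℂ} {z : ℂ} {y y' : ℝ → ℂ}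

lemma exists_lipschitzOnWith (h : IsW2Sol B z y y') : ∃ K, LipschitzOnWith K y (Icc 0 1) :=
  have ⟨_, hL⟩ := h.2.1
  exists_lipschitzOnWith_of_hasDerivWithinAt h.1 hL.continuousOn

lemma ae_hasDerivAt (h : IsW2Sol B z y y') :
    ∀ᵐ x, x ∈ uIcc 0 1 → HasDerivAt y (y' x) x ∧ HasDerivAt y' (-(z ^ 2) * B x * y x) x := by
  obtain ⟨hy, -, hy'⟩ := h
  filter_upwards [(ae_restrict_iff' measurableSet_Ioo).1 hy', Ioo_ae_eq_Icc (a := (0:ℝ)) (b := 1)]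
    with x hx hIoo hIcc
  rw [uIcc_of_le zero_le_one] at hIcc
  have hx01 : x ∈ Ioo (0:ℝ) 1 := Eq.mpr hIoo hIcc
  exact ⟨(hy x hIcc).hasDerivAt (Icc_mem_nhds hx01.1 hx01.2), hx hx01⟩

variable {b : ℂ}

lemma sub_mul_exp_eq {ν : ℂ} (h : IsW2Sol (fun _ => b) z y y') (hν : ν ^ 2 = -(z ^ 2 * b)) :
    ∀ x ∈ Icc (0:ℝ) 1, (y' x - ν * y x) * exp (ν * x) = y' 0 - ν * y 0 := by
  obtain ⟨K, hK⟩ := h.exists_lipschitzOnWith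
  obtain ⟨L, hL⟩ := h.2.1
  rw [← uIcc_of_le zero_le_one] at hK hL ⊢
  have hac : AbsolutelyContinuousOnInterval (fun x : ℝ => (y' x - ν * y x) * exp (ν * x)) 0 1 :=
    (hL.absolutelyContinuousOnInterval.sub (hK.absolutelyContinuousOnInterval.const_smul ν)).smul
      (contDiff_const.mul ofRealCLM.contDiff).cexp.contDiffOn.absolutelyContinuousOnInterval
  obtain ⟨C, hC⟩ := hac.const_of_ae_hasDerivAt_zero <| by
    filter_upwards [h.ae_hasDerivAt] with x hx hx01
    obtain ⟨hy, hy'⟩ := hx hx01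
    refine ((hy'.sub (hy.const_mul ν)).mul (hasDerivAt_exp_mul_ofReal ν x)).congr_deriv ?_
    simp only [Pi.sub_apply]
    linear_combination (-(y x) * exp (ν * x)) * hν
  intro x hx
  have h0 := hC 0 left_mem_uIcc
  simp only [ofReal_zero, mul_zero, exp_zero, mul_one] at h0
  rw [h0]
  exact hC x hx

lemma eq_mul_cos {μ : ℂ} (h : IsW2Sol (fun _ => b) z y y') (hμ : μ ^ 2 = z ^ 2 * b)
    (h0 : y' 0 = 0) :
    ∀ x ∈ Icc (0:ℝ) 1, y x = y 0 * cos (μ * x) ∧ y' x = -μ * y 0 * sin (μ * x) := by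
  have hy' : ∀ x ∈ Icc (0:ℝ) 1, y' x = -μ * y 0 * sin (μ * x) := by
    intro x hx
    have hplus := h.sub_mul_exp_eq (ν := μ * I) (by linear_combination μ ^ 2 * I_sq - hμ) x hx
    have hminus := h.sub_mul_exp_eq (ν := -(μ * I)) (by linear_combination μ ^ 2 * I_sq - hμ) x hx
    rw [show μ * I * x = μ * x * I by ring, exp_mul_I] at hplus
    rw [show -(μ * I) * x = -(μ * x) * I by ring, exp_mul_I, cos_neg, sin_neg] at hminus
    rw [h0] at hplus hminus
    -- weighting the two first integrals by `e^{∓iμx}` and adding them eliminates `y x`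
    linear_combination ((cos (μ * x) - sin (μ * x) * I) * hplus
      + (cos (μ * x) + sin (μ * x) * I) * hminus) / 2 - y' x * cos_sq_add_sin_sq (μ * x)
      + (y' x * sin (μ * x) ^ 2 + μ * y 0 * sin (μ * x)) * I_sq
  refine fun x hx => ⟨?_, hy' x hx⟩
  refine eq_of_has_deriv_right_eq (f' := y') (g := fun t : ℝ => y 0 * cos (μ * t))
    (fun t ht => ?_) (fun t ht => ?_) (fun t ht => (h.1 t ht).continuousWithinAt)
    (by fun_prop) (by simp) x hx
  · exact (h.1 t (Ico_subset_Icc_self ht)).mono_of_mem_nhdsWithin (Icc_mem_nhdsGE_of_mem ht)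
  · rw [hy' t (Ico_subset_Icc_self ht)]
    exact (((hasDerivAt_cos_mul_ofReal μ t).const_mul (y 0)).congr_deriv (by ring)).hasDerivWithinAt

end IsW2Sol

theorem quasiEigen_const_iff {b : ℝ} (hb : 0 ≤ b) (κ : ℂ) :
    QuasiEigen (fun _ => (b : ℂ)) κ ↔ cos (√b * κ) + I * √b * sin (√b * κ) = 0 := by
  set μ : ℂ := √b * κ
  have hμ : μ ^ 2 = κ ^ 2 * b := by
    rw [mul_pow, ← ofReal_pow, Real.sq_sqrt hb, mul_comm]
  constructor
  · rintro ⟨hκ, y, y', hsol, ⟨x₀, hx₀, hyx₀⟩, h0, hbd⟩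
    have hform := hsol.eq_mul_cos hμ h0
    have hy0 : y 0 ≠ 0 := fun hy0 => hyx₀ (by rw [(hform x₀ hx₀).1, hy0, zero_mul])
    obtain ⟨hy1, hy'1⟩ := hform 1 (right_mem_Icc.2 zero_le_one)
    rw [ofReal_one, mul_one] at hy1 hy'1
    rw [hy1, hy'1] at hbd
    refine (mul_eq_zero.1 ?_).resolve_left (mul_ne_zero hκ hy0)
    linear_combination hbd
  · intro hchar
    have hκ : κ ≠ 0 := by
      rintro rfl
      simp [μ] at hchar
    have hlip : ∃ L, LipschitzOnWith L (fun x : ℝ => -μ * sin (μ * x)) (Icc 0 1) :=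
      exists_lipschitzOnWith_of_hasDerivWithinAt
        (fun x _ => ((hasDerivAt_sin_mul_ofReal μ x).const_mul (-μ)).hasDerivWithinAt)
        (by fun_prop)
    refine ⟨hκ, fun x => cos (μ * x), fun x => -μ * sin (μ * x),
      ⟨fun x _ => (hasDerivAt_cos_mul_ofReal μ x).hasDerivWithinAt, hlip, ae_of_all _ fun x => ?_⟩,
      ⟨0, left_mem_Icc.2 zero_le_one, by simp⟩, by simp, ?_⟩
    · exact ((hasDerivAt_sin_mul_ofReal μ x).const_mul (-μ)).congr_deriv
        (by linear_combination -cos (μ * x) * hμ)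
    · simp only [ofReal_one, mul_one]
      linear_combination κ * hchar

lemma two_mul_exp_mul_I_mul_cos_add_I_mul_sin (s w : ℂ) :
    2 * exp (w * I) * (cos w + I * s * sin w) = (s + 1) * exp (2 * w * I) - (s - 1) := by
  have h2 : exp (2 * w * I) = exp (w * I) ^ 2 := by rw [← exp_nat_mul]; ring_nf
  rw [h2, exp_mul_I]
  linear_combination (1 - s) * cos_sq_add_sin_sq w + (s * sin w ^ 2 - sin w ^ 2) * I_sq

lemma cos_add_I_mul_sin_eq_zero_iff (s w : ℂ) :
    cos w + I * s * sin w = 0 ↔ (s + 1) * exp (2 * w * I) = s - 1 := by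
  rw [← sub_eq_zero (a := _ * _), ← two_mul_exp_mul_I_mul_cos_add_I_mul_sin]
  simp [exp_ne_zero]

lemma sqrt_sub_one_div_sqrt_add_one_eq_exp {b : ℝ} (hb : 0 < b) (hb1 : b ≠ 1) :
    ((√b - 1) / (√b + 1) : ℂ) =
      exp (-Real.log |(√b + 1) / (√b - 1)| +
        2 * Real.pi * (if 1 < b then 0 else 1 / 2 : ℝ) * I) := by
  have hs1 : √b ≠ 1 := by rwa [Ne, Real.sqrt_eq_one]
  have habs : Real.exp (-Real.log |(√b + 1) / (√b - 1)|) = |(√b - 1) / (√b + 1)| := by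
    rw [Real.exp_neg, Real.exp_log (abs_pos.2 (div_ne_zero (by positivity) (sub_ne_zero.2 hs1))),
      ← abs_inv, inv_div]
  rw [exp_add, ← ofReal_neg, ← ofReal_exp, habs]
  split_ifs with h
  · have : 1 < √b := (Real.lt_sqrt zero_le_one).2 (by simpa using h)
    rw [abs_of_pos (div_pos (by linarith) (by positivity))]
    simp
  · have : √b < 1 := (Real.sqrt_lt' one_pos).2 (by simpa using lt_of_le_of_ne (not_lt.1 h) hb1)
    rw [abs_of_neg (div_neg_of_neg_of_pos (by linarith) (by positivity))]
    push_cast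
    rw [show 2 * Real.pi * (1 / 2) * I = Real.pi * I by ring, exp_pi_mul_I]
    ring

lemma cos_add_I_mul_sin_sqrt_mul_eq_zero_iff {b : ℝ} (hb : 0 < b) (hb1 : b ≠ 1) (κ : ℂ) :
    cos (√b * κ) + I * √b * sin (√b * κ) = 0 ↔
      ∃ n : ℤ, κ = I * (((1 / (2 * √b)) * Real.log |(√b + 1) / (√b - 1)| : ℝ) : ℂ) +
        ((Real.pi / √b * (n + if 1 < b then 0 else 1 / 2) : ℝ) : ℂ) := by
  have hs : (√b : ℂ) ≠ 0 := ofReal_ne_zero.2 (Real.sqrt_pos.2 hb).ne'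
  have hs1 : (√b : ℂ) + 1 ≠ 0 := by exact_mod_cast (by positivity : √b + 1 ≠ 0)
  rw [cos_add_I_mul_sin_eq_zero_iff, mul_comm, ← eq_div_iff hs1,
    sqrt_sub_one_div_sqrt_add_one_eq_exp hb hb1, exp_eq_exp_iff_exists_int]
  refine exists_congr fun n => ?_
  generalize Real.log |(√b + 1) / (√b - 1)| = L
  generalize (if 1 < b then 0 else 1 / 2 : ℝ) = c
  push_cast
  have hsI : 2 * (√b : ℂ) * I ≠ 0 := by simp [hs]
  have key : (-L + 2 * Real.pi * c * I + n * (2 * Real.pi * I)) / (2 * √b * I) =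
      I * (1 / (2 * √b) * L) + Real.pi / √b * (n + c) := by
    field_simp
    linear_combination -L * I_sq
  rw [← key, eq_div_iff hsI]
  constructor <;> intro h <;> linear_combination h

/-- Quasi-eigenvalues of constant structures.
For `B ≡ b ≥ 0`: if `b ∈ {0,1}` then `K(B) = ∅`; otherwise
`K(B) = { (i/(2√b))·log|(√b+1)/(√b−1)| + (π/√b)(n+c) : n ∈ ℤ }`,
with `c = 0` if `b > 1` and `c = 1/2` if `b < 1`. -/
theorem statement5 (b : ℝ) (hb : 0 ≤ b) :
    ((b = 0 ∨ b = 1) → ∀ κ : ℂ, ¬ QuasiEigen (fun _ => (b : ℂ)) κ) ∧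
    ((b ≠ 0 ∧ b ≠ 1) → ∀ κ : ℂ,
      (QuasiEigen (fun _ => (b : ℂ)) κ ↔
        ∃ n : ℤ, κ = Complex.I *
            ((( 1 / (2 * Real.sqrt b)) *
              Real.log (|(Real.sqrt b + 1) / (Real.sqrt b - 1)|) : ℝ) : ℂ) +
          (((Real.pi / Real.sqrt b) * ((n : ℝ) + (if 1 < b then (0:ℝ) else 1/2)) : ℝ) : ℂ))) := by
  refine ⟨?_, fun ⟨hb0, hb1⟩ κ => ?_⟩
  · rintro (rfl | rfl) κ h
    · simpa using (quasiEigen_const_iff le_rfl κ).1 h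
    · have hchar := (quasiEigen_const_iff zero_le_one κ).1 h
      simp only [Real.sqrt_one, ofReal_one, mul_one, one_mul] at hchar
      exact exp_ne_zero (κ * I) (by rw [exp_mul_I]; linear_combination hchar)
  · rw [quasiEigen_const_iff hb,
      cos_add_I_mul_sin_sqrt_mul_eq_zero_iff (lt_of_le_of_ne hb (Ne.symm hb0)) hb1]
end
end

section
/- (i) If b2 ≤ 1, then there is no κ ∈ K(Ad) with Re κ = 0 (equivalently, I(0) = +∞). (ii) If b2 > 1, then I(0) = (1/(2√b2))·log((√b2 + 1)/(√b2 − 1)), and the only structure B ∈ Ad with i·I(0) ∈ K(B) is the constant function B ≡ b2 (up to equality a.e.). -/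
open MeasureTheory Set Complex intervalIntegral

noncomputable section

/-!
For `κ = i t` the equation reads `y'' = t² B y`. An energy estimate gives `y(0) ≠ 0`, so a real
projection `u` of `y` has `u(0) > 0`, `u'(0) = 0`; then `u u'` is nondecreasing from `0`, hence
`u > 0`, and the boundary condition `u'(1) = t u(1)` forces `t > 0`. Compare `u` with
`cosh (c x)`, `c = t √b2`, the solution for the constant structure `b2`: their Wronskian
`W = u' cosh (c x) - u c sinh (c x)` has derivative `t² (B - b2) u cosh (c x) ≤ 0`, so
`W(1) ≤ W(0) = 0`, i.e. `cosh c ≤ √b2 sinh c`, with equality only if `B = b2` a.e. This inequality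
is impossible for `b2 ≤ 1`; for `b2 > 1` it says `2 c ≥ log ((√b2 + 1) / (√b2 - 1))`, and equality
is attained by `B ≡ b2`.
-/

open Topology

theorem AbsolutelyContinuousOnInterval.monotoneOn_of_ae_hasDerivAt_nonneg {f f' : ℝ → ℝ}
    {a b : ℝ} (hf : AbsolutelyContinuousOnInterval f a b)
    (hderiv : ∀ᵐ x ∂volume.restrict (Ioo a b), HasDerivAt f (f' x) x)
    (hnonneg : ∀ᵐ x ∂volume.restrict (Ioo a b), 0 ≤ f' x) :
    MonotoneOn f (Icc a b) := by
  intro x hx y hy hxy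
  have hsub : uIcc x y ⊆ uIcc a b := by
    rw [uIcc_of_le hxy, uIcc_of_le (hx.1.trans hx.2)]
    exact Icc_subset_Icc hx.1 hy.2
  rw [← sub_nonneg, ← (hf.mono hsub).integral_deriv_eq_sub]
  refine intervalIntegral.integral_nonneg_of_ae_restrict hxy ?_
  rw [← Measure.restrict_congr_set Ioo_ae_eq_Icc]
  have hle : volume.restrict (Ioo x y) ≤ volume.restrict (Ioo a b) :=
    Measure.restrict_mono (Ioo_subset_Ioo hx.1 hy.2) le_rfl
  filter_upwards [ae_mono hle hderiv, ae_mono hle hnonneg] with z hz hz'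
  exact hz.deriv ▸ hz'

theorem AbsolutelyContinuousOnInterval.antitoneOn_of_ae_hasDerivAt_nonpos {f f' : ℝ → ℝ}
    {a b : ℝ} (hf : AbsolutelyContinuousOnInterval f a b)
    (hderiv : ∀ᵐ x ∂volume.restrict (Ioo a b), HasDerivAt f (f' x) x)
    (hnonpos : ∀ᵐ x ∂volume.restrict (Ioo a b), f' x ≤ 0) :
    AntitoneOn f (Icc a b) := by
  have := hf.neg.monotoneOn_of_ae_hasDerivAt_nonneg (f' := -f')
    (hderiv.mono fun x hx => hx.neg) (hnonpos.mono fun x hx => neg_nonneg.2 hx)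
  exact fun x hx y hy hxy => neg_le_neg_iff.1 (this hx hy hxy)

theorem AntitoneOn.hasDerivAt_eq_zero_of_eq {f : ℝ → ℝ} {a b x f' : ℝ}
    (hf : AntitoneOn f (Icc a b)) (hab : f b = f a) (hx : x ∈ Ioo a b)
    (hd : HasDerivAt f f' x) : f' = 0 := by
  have hconst : f =ᶠ[𝓝 x] fun _ => f a := by
    filter_upwards [Icc_mem_nhds hx.1 hx.2] with z hz
    have ha : a ∈ Icc a b := left_mem_Icc.2 (hx.1.trans hx.2).le
    have hb : b ∈ Icc a b := right_mem_Icc.2 (hx.1.trans hx.2).le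
    exact le_antisymm (hf ha hz hz.1) (hab ▸ hf hz hb hz.2)
  exact hd.unique ((hasDerivAt_const x (f a)).congr_of_eventuallyEq hconst)

structure IsRealSol (q u u' : ℝ → ℝ) : Prop where
  hasDerivWithinAt : ∀ x ∈ Icc (0:ℝ) 1, HasDerivWithinAt u (u' x) (Icc 0 1) x
  absolutelyContinuousOnInterval_deriv : AbsolutelyContinuousOnInterval u' 0 1
  ae_hasDerivAt_deriv : ∀ᵐ x ∂mu01, HasDerivAt u' (q x * u x) x

def coshWronskian (c : ℝ) (u u' : ℝ → ℝ) (x : ℝ) : ℝ :=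
  u' x * Real.cosh (c * x) - u x * (c * Real.sinh (c * x))

namespace IsRealSol

variable {q u u' : ℝ → ℝ}

theorem continuousOn (h : IsRealSol q u u') : ContinuousOn u (Icc 0 1) :=
  fun x hx => (h.hasDerivWithinAt x hx).continuousWithinAt

theorem absolutelyContinuousOnInterval (h : IsRealSol q u u') :
    AbsolutelyContinuousOnInterval u 0 1 := by
  obtain ⟨C, hC⟩ := h.absolutelyContinuousOnInterval_deriv.exists_bound
  rw [uIcc_of_le zero_le_one] at hC
  refine LipschitzOnWith.absolutelyContinuousOnInterval (K := C.toNNReal) ?_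
  rw [uIcc_of_le zero_le_one]
  refine (convex_Icc 0 1).lipschitzOnWith_of_nnnorm_hasDerivWithin_le h.hasDerivWithinAt
    fun x hx => ?_
  rw [← NNReal.coe_le_coe, coe_nnnorm]
  exact (hC x hx).trans (Real.le_coe_toNNReal C)

theorem ae_hasDerivAt (h : IsRealSol q u u') : ∀ᵐ x ∂mu01, HasDerivAt u (u' x) x := by
  filter_upwards [ae_restrict_mem measurableSet_Ioo] with x hx
  exact (h.hasDerivWithinAt x (Ioo_subset_Icc_self hx)).hasDerivAt (Icc_mem_nhds hx.1 hx.2)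

theorem eq_zero_of_eq_zero {M : ℝ} (h : IsRealSol q u u') (hq : ∀ᵐ x ∂mu01, |q x| ≤ M)
    (hu0 : u 0 = 0) (hu'0 : u' 0 = 0) : ∀ x ∈ Icc (0:ℝ) 1, u x = 0 := by
  -- the energy `u² + u'²` grows at rate at most `1 + M`, so the weighted energy is antitone
  set e : ℝ → ℝ := fun x => Real.exp (-(1 + M) * x)
  have he : ∀ x, HasDerivAt e (e x * -(1 + M)) x := fun x =>
    ((hasDerivAt_id x).const_mul (-(1 + M))).exp.congr_deriv (by simp [e])
  set E : ℝ → ℝ := fun x => (u x * u x + u' x * u' x) * e x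
  have hac : AbsolutelyContinuousOnInterval E 0 1 := by
    have hu := h.absolutelyContinuousOnInterval
    have hu' := h.absolutelyContinuousOnInterval_deriv
    exact ((hu.fun_mul hu).add (hu'.fun_mul hu')).fun_mul
      (by fun_prop : ContDiff ℝ 1 e).contDiffOn.absolutelyContinuousOnInterval
  have hanti : AntitoneOn E (Icc 0 1) := by
    refine hac.antitoneOn_of_ae_hasDerivAt_nonpos
      (f' := fun x => (u' x * u x + u x * u' x + ((q x * u x) * u' x + u' x * (q x * u x))) * e x
        + (u x * u x + u' x * u' x) * (e x * -(1 + M))) ?_ ?_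
    · filter_upwards [h.ae_hasDerivAt, h.ae_hasDerivAt_deriv] with x hu hu'
      exact ((hu.mul hu).add (hu'.mul hu')).mul (he x)
    · filter_upwards [hq] with x hqx
      have hex : 0 < e x := Real.exp_pos _
      obtain ⟨hq1, hq2⟩ := abs_le.1 hqx
      -- `M (u² + u'²) - 2 q u u' = (M - q)(u + u')² / 2 + (M + q)(u - u')² / 2`
      nlinarith [mul_nonneg (sub_nonneg.2 hq2) (sq_nonneg (u x + u' x)),
        mul_nonneg (neg_le_iff_add_nonneg.1 hq1) (sq_nonneg (u x - u' x)),
        sq_nonneg (u x - u' x)]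
  intro x hx
  have hEx : E x ≤ 0 := by simpa [E, hu0, hu'0] using hanti (left_mem_Icc.2 zero_le_one) hx hx.1
  have hsum : u x * u x + u' x * u' x ≤ 0 :=
    le_of_mul_le_mul_right (by simpa [E] using hEx) (Real.exp_pos _)
  exact mul_self_eq_zero.1 (by nlinarith [mul_self_nonneg (u x), mul_self_nonneg (u' x)])

theorem mul_deriv_nonneg (h : IsRealSol q u u') (hq : ∀ᵐ x ∂mu01, 0 ≤ q x) (hu'0 : u' 0 = 0) :
    ∀ x ∈ Icc (0:ℝ) 1, 0 ≤ u x * u' x := by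
  have hmono : MonotoneOn (fun x => u x * u' x) (Icc 0 1) := by
    refine (h.absolutelyContinuousOnInterval.fun_mul
      h.absolutelyContinuousOnInterval_deriv).monotoneOn_of_ae_hasDerivAt_nonneg
      (f' := fun x => u' x * u' x + u x * (q x * u x)) ?_ ?_
    · filter_upwards [h.ae_hasDerivAt, h.ae_hasDerivAt_deriv] with x hu hu'
      exact hu.mul hu'
    · filter_upwards [hq] with x hqx
      nlinarith [mul_self_nonneg (u' x), mul_nonneg hqx (mul_self_nonneg (u x))]
  intro x hx
  simpa [hu'0] using hmono (left_mem_Icc.2 zero_le_one) hx hx.1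

theorem pos (h : IsRealSol q u u') (hq : ∀ᵐ x ∂mu01, 0 ≤ q x) (hu0 : 0 < u 0)
    (hu'0 : u' 0 = 0) : ∀ x ∈ Icc (0:ℝ) 1, 0 < u x := by
  have hmono : MonotoneOn (fun x => u x * u x) (Icc 0 1) := by
    refine (h.absolutelyContinuousOnInterval.fun_mul
      h.absolutelyContinuousOnInterval).monotoneOn_of_ae_hasDerivAt_nonneg
      (f' := fun x => u' x * u x + u x * u' x) ?_ ?_
    · filter_upwards [h.ae_hasDerivAt] with x hu
      exact hu.mul hu
    · filter_upwards [ae_restrict_mem measurableSet_Ioo] with x hx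
      linarith [h.mul_deriv_nonneg hq hu'0 x (Ioo_subset_Icc_self hx)]
  intro x hx
  by_contra! hux
  -- `u` would vanish somewhere in `[0, x]`, while `u²` is bounded below by `u(0)² > 0`
  obtain ⟨z, hz, huz⟩ := intermediate_value_Icc' hx.1 (h.continuousOn.mono
    (Icc_subset_Icc le_rfl hx.2)) ⟨hux, hu0.le⟩
  have hzI : z ∈ Icc (0:ℝ) 1 := ⟨hz.1, hz.2.trans hx.2⟩
  have := hmono (left_mem_Icc.2 zero_le_one) hzI hz.1
  simp only [huz, mul_zero] at this
  nlinarith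

theorem ae_hasDerivAt_coshWronskian (h : IsRealSol q u u') (c : ℝ) :
    ∀ᵐ x ∂mu01, HasDerivAt (coshWronskian c u u')
      ((q x - c ^ 2) * u x * Real.cosh (c * x)) x := by
  filter_upwards [h.ae_hasDerivAt, h.ae_hasDerivAt_deriv] with x hu hu'
  have hlin : HasDerivAt (fun x => c * x) c x := by simpa using (hasDerivAt_id x).const_mul c
  have hcosh := (Real.hasDerivAt_cosh (c * x)).comp x hlin
  have hsinh := ((Real.hasDerivAt_sinh (c * x)).comp x hlin).const_mul c
  exact ((hu'.mul hcosh).sub (hu.mul hsinh)).congr_deriv (by simp only [Function.comp_apply]; ring)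

theorem absolutelyContinuousOnInterval_coshWronskian (h : IsRealSol q u u') (c : ℝ) :
    AbsolutelyContinuousOnInterval (coshWronskian c u u') 0 1 :=
  (h.absolutelyContinuousOnInterval_deriv.fun_mul
      (by fun_prop : ContDiff ℝ 1 fun x => Real.cosh (c * x)).contDiffOn.absolutelyContinuousOnInterval).sub
    (h.absolutelyContinuousOnInterval.fun_mul
      (by fun_prop : ContDiff ℝ 1 fun x => c * Real.sinh (c * x)).contDiffOn.absolutelyContinuousOnInterval)

theorem antitoneOn_coshWronskian (h : IsRealSol q u u') {c : ℝ} (hq : ∀ᵐ x ∂mu01, q x ≤ c ^ 2)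
    (hu : ∀ x ∈ Icc (0:ℝ) 1, 0 ≤ u x) : AntitoneOn (coshWronskian c u u') (Icc 0 1) := by
  refine (h.absolutelyContinuousOnInterval_coshWronskian c).antitoneOn_of_ae_hasDerivAt_nonpos
    (h.ae_hasDerivAt_coshWronskian c) ?_
  filter_upwards [hq, ae_restrict_mem measurableSet_Ioo] with x hqx hx
  exact mul_nonpos_of_nonpos_of_nonneg
    (mul_nonpos_of_nonpos_of_nonneg (by linarith) (hu x (Ioo_subset_Icc_self hx)))
    (Real.cosh_pos _).le

theorem ae_eq_of_coshWronskian_eq (h : IsRealSol q u u') {c : ℝ} (hq : ∀ᵐ x ∂mu01, q x ≤ c ^ 2)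
    (hu : ∀ x ∈ Icc (0:ℝ) 1, 0 < u x) (heq : coshWronskian c u u' 1 = coshWronskian c u u' 0) :
    ∀ᵐ x ∂mu01, q x = c ^ 2 := by
  have hanti := h.antitoneOn_coshWronskian hq fun x hx => (hu x hx).le
  filter_upwards [h.ae_hasDerivAt_coshWronskian c, ae_restrict_mem measurableSet_Ioo]
    with x hd hx
  have hzero := hanti.hasDerivAt_eq_zero_of_eq heq hx hd
  have hux := hu x (Ioo_subset_Icc_self hx)
  have hcosh := Real.cosh_pos (c * x)
  simp only [mul_eq_zero, hux.ne', hcosh.ne', or_false] at hzero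
  linarith

end IsRealSol

theorem IsW2Sol.isRealSol_re_mul {B : ℝ → ℝ} {t : ℝ} {y y' : ℝ → ℂ}
    (h : IsW2Sol (fun x => (B x : ℂ)) (t * I) y y') (c : ℂ) :
    IsRealSol (fun x => t ^ 2 * B x) (fun x => (c * y x).re) (fun x => (c * y' x).re) := by
  obtain ⟨hy, ⟨L, hL⟩, hode⟩ := h
  let T : ℂ →L[ℝ] ℝ := reCLM.comp (ContinuousLinearMap.mul ℝ ℂ c)
  have hT : ∀ z, T z = (c * z).re := fun z => rfl
  refine ⟨fun x hx => ?_, ?_, ?_⟩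
  · simpa only [Function.comp_def, hT] using T.hasFDerivAt.comp_hasDerivWithinAt x (hy x hx)
  · rw [← uIcc_of_le zero_le_one] at hL
    simpa only [Function.comp_def, hT] using
      (T.lipschitz.comp_lipschitzOnWith hL).absolutelyContinuousOnInterval
  · filter_upwards [hode] with x hx
    refine (T.hasFDerivAt.comp_hasDerivAt x hx).congr_deriv ?_
    rw [hT, mul_pow, I_sq, show c * (-((t : ℂ) ^ 2 * -1) * (B x) * y x)
      = ((t ^ 2 * B x : ℝ) : ℂ) * (c * y x) by push_cast; ring, re_ofReal_mul]

theorem QuasiEigen.exists_isRealSol {B : ℝ → ℝ} {M t : ℝ} (hB : ∀ᵐ x ∂mu01, |B x| ≤ M)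
    (h : QuasiEigen (fun x => (B x : ℂ)) (t * I)) :
    ∃ u u', IsRealSol (fun x => t ^ 2 * B x) u u' ∧ 0 < u 0 ∧ u' 0 = 0 ∧ u' 1 = t * u 1 := by
  obtain ⟨-, y, y', hsol, ⟨x₀, hx₀, hyx₀⟩, hy'0, hbc⟩ := h
  have hy0 : y 0 ≠ 0 := by
    intro hy0
    have hq : ∀ᵐ x ∂mu01, |t ^ 2 * B x| ≤ t ^ 2 * M := by
      filter_upwards [hB] with x hx
      rw [abs_mul, abs_of_nonneg (sq_nonneg t)]
      exact mul_le_mul_of_nonneg_left hx (sq_nonneg t)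
    have hre (c : ℂ) : (c * y x₀).re = 0 :=
      (hsol.isRealSol_re_mul c).eq_zero_of_eq_zero hq (by simp [hy0]) (by simp [hy'0]) x₀ hx₀
    exact hyx₀ (Complex.ext (by simpa using hre 1) (by simpa using hre (-I)))
  refine ⟨_, _, hsol.isRealSol_re_mul (starRingEnd ℂ (y 0)), ?_, by simp [hy'0], ?_⟩
  · simpa [mul_comm, mul_conj] using normSq_pos.2 hy0
  · have hy'1 : y' 1 = t * y 1 := mul_left_cancel₀ I_ne_zero (by rw [← hbc]; ring)
    simp only [hy'1, show ∀ z, starRingEnd ℂ (y 0) * (t * z) = t * (starRingEnd ℂ (y 0) * z)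
      from fun z => by ring, re_ofReal_mul]

section ImaginaryAxis

variable {B : ℝ → ℝ} {s t : ℝ}

theorem ae_abs_le_of_ae_nonneg_of_le (hB : ∀ᵐ x ∂mu01, 0 ≤ B x ∧ B x ≤ s ^ 2) :
    ∀ᵐ x ∂mu01, |B x| ≤ s ^ 2 :=
  hB.mono fun _ hx => abs_le.2 ⟨by linarith [sq_nonneg s], hx.2⟩

theorem QuasiEigen.pos_of_mul_I (hB : ∀ᵐ x ∂mu01, 0 ≤ B x ∧ B x ≤ s ^ 2)
    (h : QuasiEigen (fun x => (B x : ℂ)) (t * I)) : 0 < t := by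
  obtain ⟨u, u', hsol, hu0, hu'0, hu'1⟩ := h.exists_isRealSol (ae_abs_le_of_ae_nonneg_of_le hB)
  have hq : ∀ᵐ x ∂mu01, 0 ≤ t ^ 2 * B x := hB.mono fun x hx => mul_nonneg (sq_nonneg t) hx.1
  have hu1 := hsol.pos hq hu0 hu'0 1 (right_mem_Icc.2 zero_le_one)
  have hP := hsol.mul_deriv_nonneg hq hu'0 1 (right_mem_Icc.2 zero_le_one)
  have ht : t ≠ 0 := fun ht => h.1 (by simp [ht])
  rw [hu'1] at hP
  exact ht.symm.lt_of_le (nonneg_of_mul_nonneg_left (by nlinarith) (mul_pos hu1 hu1))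

theorem coshWronskian_one_of_deriv_eq {u u' : ℝ → ℝ} (hu'1 : u' 1 = t * u 1) :
    coshWronskian (t * s) u u' 1 = t * u 1 * (Real.cosh (t * s) - s * Real.sinh (t * s)) := by
  simp only [coshWronskian, hu'1, mul_one]
  ring

theorem QuasiEigen.cosh_le_mul_sinh (hB : ∀ᵐ x ∂mu01, 0 ≤ B x ∧ B x ≤ s ^ 2)
    (h : QuasiEigen (fun x => (B x : ℂ)) (t * I)) :
    Real.cosh (t * s) ≤ s * Real.sinh (t * s) := by
  obtain ⟨u, u', hsol, hu0, hu'0, hu'1⟩ := h.exists_isRealSol (ae_abs_le_of_ae_nonneg_of_le hB)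
  have hq : ∀ᵐ x ∂mu01, 0 ≤ t ^ 2 * B x := hB.mono fun x hx => mul_nonneg (sq_nonneg t) hx.1
  have hqc : ∀ᵐ x ∂mu01, t ^ 2 * B x ≤ (t * s) ^ 2 :=
    hB.mono fun x hx => mul_pow t s 2 ▸ mul_le_mul_of_nonneg_left hx.2 (sq_nonneg t)
  have hu := hsol.pos hq hu0 hu'0
  have hW := hsol.antitoneOn_coshWronskian hqc (fun x hx => (hu x hx).le)
    (left_mem_Icc.2 zero_le_one) (right_mem_Icc.2 zero_le_one) zero_le_one
  rw [coshWronskian_one_of_deriv_eq hu'1] at hW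
  simp only [coshWronskian, hu'0, mul_zero, Real.sinh_zero, zero_mul, sub_zero] at hW
  have htu : 0 < t * u 1 := mul_pos (h.pos_of_mul_I hB) (hu 1 (right_mem_Icc.2 zero_le_one))
  linarith [nonpos_of_mul_nonpos_right hW htu]

theorem QuasiEigen.ae_eq_of_cosh_eq_mul_sinh (hB : ∀ᵐ x ∂mu01, 0 ≤ B x ∧ B x ≤ s ^ 2)
    (h : QuasiEigen (fun x => (B x : ℂ)) (t * I))
    (heq : Real.cosh (t * s) = s * Real.sinh (t * s)) : ∀ᵐ x ∂mu01, B x = s ^ 2 := by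
  obtain ⟨u, u', hsol, hu0, hu'0, hu'1⟩ := h.exists_isRealSol (ae_abs_le_of_ae_nonneg_of_le hB)
  have hq : ∀ᵐ x ∂mu01, 0 ≤ t ^ 2 * B x := hB.mono fun x hx => mul_nonneg (sq_nonneg t) hx.1
  have hqc : ∀ᵐ x ∂mu01, t ^ 2 * B x ≤ (t * s) ^ 2 :=
    hB.mono fun x hx => mul_pow t s 2 ▸ mul_le_mul_of_nonneg_left hx.2 (sq_nonneg t)
  have hW : coshWronskian (t * s) u u' 1 = coshWronskian (t * s) u u' 0 := by
    rw [coshWronskian_one_of_deriv_eq hu'1, heq]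
    simp [coshWronskian, hu'0]
  have ht : t ≠ 0 := fun ht => h.1 (by simp [ht])
  filter_upwards [hsol.ae_eq_of_coshWronskian_eq hqc (hsol.pos hq hu0 hu'0) hW] with x hx
  rw [mul_pow] at hx
  exact mul_left_cancel₀ (pow_ne_zero 2 ht) hx

end ImaginaryAxis

theorem quasiEigen_const_of_cosh_eq {s t : ℝ} (ht : t ≠ 0)
    (h : Real.cosh (t * s) = s * Real.sinh (t * s)) :
    QuasiEigen (fun _ => ((s ^ 2 : ℝ) : ℂ)) (t * I) := by
  set c := t * s
  have hlin (x : ℝ) : HasDerivAt (fun x => c * x) c x := by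
    simpa using (hasDerivAt_id x).const_mul c
  have hy (x : ℝ) : HasDerivAt (fun x => (Real.cosh (c * x) : ℂ)) (c * Real.sinh (c * x) : ℝ) x :=
    ((hlin x).cosh.congr_deriv (mul_comm _ _)).ofReal_comp
  have hy' (x : ℝ) : HasDerivAt (fun x => ((c * Real.sinh (c * x) : ℝ) : ℂ))
      (c ^ 2 * Real.cosh (c * x) : ℝ) x :=
    (((hlin x).sinh.const_mul c).congr_deriv (by ring)).ofReal_comp
  refine ⟨mul_ne_zero (ofReal_ne_zero.2 ht) I_ne_zero, _, _,
    ⟨fun x _ => (hy x).hasDerivWithinAt, ?_, ae_of_all _ fun x => (hy' x).congr_deriv ?_⟩,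
    ⟨0, left_mem_Icc.2 zero_le_one, by simp⟩, by simp, ?_⟩
  · exact (ofRealCLM.contDiff.comp (by fun_prop : ContDiff ℝ 1 fun x => c * Real.sinh (c * x))
      |>.contDiffOn.exists_lipschitzOnWith one_ne_zero (convex_Icc 0 1) isCompact_Icc)
  · simp only [c, mul_pow, I_sq]
    push_cast
    ring
  · simp only [mul_one, c, h]
    push_cast
    ring

theorem two_mul_exp_mul_sinh_sub_cosh (s p : ℝ) :
    2 * Real.exp p * (s * Real.sinh p - Real.cosh p) = (s - 1) * Real.exp (2 * p) - (s + 1) := by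
  have h : Real.exp p * Real.exp (-p) = 1 := by rw [← Real.exp_add, add_neg_cancel, Real.exp_zero]
  rw [Real.sinh_eq, Real.cosh_eq, two_mul p, Real.exp_add]
  linear_combination (-(s + 1)) * h

theorem cosh_le_mul_sinh_iff {s p : ℝ} (hs : 1 < s) :
    Real.cosh p ≤ s * Real.sinh p ↔ Real.log ((s + 1) / (s - 1)) / 2 ≤ p := by
  rw [← sub_nonneg, ← mul_nonneg_iff_of_pos_left (by positivity : 0 < 2 * Real.exp p),
    two_mul_exp_mul_sinh_sub_cosh, sub_nonneg, ← div_le_iff₀' (sub_pos.2 hs),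
    ← Real.log_le_iff_le_exp (div_pos (by linarith) (sub_pos.2 hs)), div_le_iff₀ two_pos, mul_comm]

theorem cosh_eq_mul_sinh_of_two_mul_eq_log {s p : ℝ} (hs : 1 < s)
    (hp : 2 * p = Real.log ((s + 1) / (s - 1))) : Real.cosh p = s * Real.sinh p := by
  have h := two_mul_exp_mul_sinh_sub_cosh s p
  rw [hp, Real.exp_log (div_pos (by linarith) (sub_pos.2 hs)), mul_div_cancel₀ _ (by linarith),
    sub_self] at h
  linarith [(mul_eq_zero.1 h).resolve_left (by positivity)]

theorem InAd.ae_nonneg_le_sqrt_sq {b1 b2 : ℝ} {B : ℝ → ℝ} (hb1 : 0 ≤ b1) (hb2 : 0 ≤ b2)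
    (hB : InAd b1 b2 B) : ∀ᵐ x ∂mu01, 0 ≤ B x ∧ B x ≤ √b2 ^ 2 :=
  hB.2.mono fun _ hx => ⟨hb1.trans hx.1, (Real.sq_sqrt hb2).symm ▸ hx.2⟩

theorem isLeast_imaginary_KAd {b1 b2 : ℝ} (hb1 : 0 ≤ b1) (hb12 : b1 ≤ b2) (hb2 : 1 < b2) :
    IsLeast {t : ℝ | (t : ℂ) * I ∈ KAd b1 b2}
      (1 / (2 * √b2) * Real.log ((√b2 + 1) / (√b2 - 1))) := by
  have hs : 1 < √b2 := by rwa [Real.lt_sqrt zero_le_one, one_pow]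
  have hts : 2 * (1 / (2 * √b2) * Real.log ((√b2 + 1) / (√b2 - 1)) * √b2) =
      Real.log ((√b2 + 1) / (√b2 - 1)) := by
    field_simp
  refine ⟨⟨fun _ => b2, ⟨aestronglyMeasurable_const, ae_of_all _ fun _ => ⟨hb12, le_rfl⟩⟩, ?_⟩,
    fun t ⟨B, hB, hq⟩ => ?_⟩
  · have hpos : 0 < Real.log ((√b2 + 1) / (√b2 - 1)) :=
      Real.log_pos ((one_lt_div (by linarith)).2 (by linarith))
    simpa only [Real.sq_sqrt (zero_le_one.trans hb2.le)] using
      quasiEigen_const_of_cosh_eq (by positivity) (cosh_eq_mul_sinh_of_two_mul_eq_log hs hts)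
  · have hle := hq.cosh_le_mul_sinh (hB.ae_nonneg_le_sqrt_sq hb1 (zero_le_one.trans hb2.le))
    rw [cosh_le_mul_sinh_iff hs, ← hts] at hle
    exact le_of_mul_le_mul_right (by linarith) (zero_lt_one.trans hs)

theorem statement7_general (b1 b2 : ℝ) (hb1 : 0 ≤ b1) (hb12 : b1 ≤ b2) :
    (b2 ≤ 1 → ∀ κ ∈ KAd b1 b2, κ.re ≠ 0) ∧
    (1 < b2 →
      sInf {t : ℝ | (t : ℂ) * Complex.I ∈ KAd b1 b2} =
        (1 / (2 * Real.sqrt b2)) * Real.log ((Real.sqrt b2 + 1) / (Real.sqrt b2 - 1)) ∧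
      ∀ B : ℝ → ℝ, InAd b1 b2 B →
        QuasiEigen (fun x => ((B x : ℝ) : ℂ))
          (((sInf {t : ℝ | (t : ℂ) * Complex.I ∈ KAd b1 b2} : ℝ) : ℂ) * Complex.I) →
        (∀ᵐ x ∂mu01, B x = b2)) := by
  have hb2 : 0 ≤ b2 := hb1.trans hb12
  refine ⟨fun hb21 κ ⟨B, hB, hq⟩ hre => ?_, fun hb21 => ?_⟩
  · rw [show κ = (κ.im : ℂ) * I from Complex.ext (by simp [hre]) (by simp)] at hq
    have hAd := hB.ae_nonneg_le_sqrt_sq hb1 hb2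
    have hsinh : 0 ≤ Real.sinh (κ.im * √b2) :=
      Real.sinh_nonneg_iff.2 (mul_nonneg (hq.pos_of_mul_I hAd).le (Real.sqrt_nonneg b2))
    nlinarith [hq.cosh_le_mul_sinh hAd, Real.sinh_lt_cosh (κ.im * √b2),
      Real.sqrt_le_one.2 hb21]
  · rw [(isLeast_imaginary_KAd hb1 hb12 hb21).csInf_eq]
    refine ⟨rfl, fun B hB hq => ?_⟩
    have hs : 1 < √b2 := by rwa [Real.lt_sqrt zero_le_one, one_pow]
    simpa only [Real.sq_sqrt hb2] using hq.ae_eq_of_cosh_eq_mul_sinh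
      (hB.ae_nonneg_le_sqrt_sq hb1 hb2) (cosh_eq_mul_sinh_of_two_mul_eq_log hs (by field_simp))

/-- The optimal quasi-eigenvalue on the imaginary axis.
(i) If `b2 ≤ 1` then no `κ ∈ K(Ad)` has `Re κ = 0`.
(ii) If `b2 > 1` then `I(0) = (1/(2√b2))·log((√b2+1)/(√b2−1))` and the only `B ∈ Ad`
with `i·I(0) ∈ K(B)` is `B ≡ b2` (up to equality a.e.). -/
theorem statement7 (b1 b2 : ℝ) (hb1 : 0 ≤ b1) (hb12 : b1 ≤ b2) (hb2 : 0 < b2) :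
    (b2 ≤ 1 → ∀ κ ∈ KAd b1 b2, κ.re ≠ 0) ∧
    (1 < b2 →
      sInf {t : ℝ | (t : ℂ) * Complex.I ∈ KAd b1 b2} =
        (1 / (2 * Real.sqrt b2)) * Real.log ((Real.sqrt b2 + 1) / (Real.sqrt b2 - 1)) ∧
      ∀ B : ℝ → ℝ, InAd b1 b2 B →
        QuasiEigen (fun x => ((B x : ℝ) : ℂ))
          (((sInf {t : ℝ | (t : ℂ) * Complex.I ∈ KAd b1 b2} : ℝ) : ℂ) * Complex.I) →
        (∀ᵐ x ∂mu01, B x = b2)) :=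
  statement7_general b1 b2 hb1 hb12
end
end

section
/- Let r ≥ 1 and let P(z, ζ) = z^r + h_1(ζ) z^{r−1} + ⋯ + h_r(ζ) be a monic polynomial in z whose coefficients h_j are analytic functions of ζ in a neighborhood of 0 with h_j(0) = 0 for j = 1, …, r and h_r'(0) ≠ 0. Then for every ε > 0 there exists δ > 0 such that for every ζ with 0 < |ζ| < δ, the polynomial P(·, ζ) has exactly r roots, these roots are pairwise distinct (hence simple), and every root z of P(·, ζ) satisfies |z^r + ζ h_r'(0)| ≤ ε |ζ|. -/
/-!
For small `ζ` the coefficients are `O(|ζ|)`, so a Cauchy-type bound makes every root `z` of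
`P(·, ζ)` small, and then the terms `h_j(ζ) z^(r-j)` with `j < r` are `o(|ζ|)`. Hence
`z^r = -h_r(ζ) + o(|ζ|) = -ζ h_r'(0) + o(|ζ|)`. At a multiple root, `z P' - r P` vanishes too,
i.e. `∑ j h_j(ζ) z^(r-j) = 0`; this gives `r h_r(ζ) = o(|ζ|)`, contradicting `h_r'(0) ≠ 0`.
So the `r` roots counted with multiplicity are pairwise distinct.
-/

open Polynomial Finset Filter Asymptotics Topology

/-- `a j` is the coefficient of `X ^ (r - j)`; the value `a 0` is ignored. -/
noncomputable def monicPoly {R : Type*} [Semiring R] (r : ℕ) (a : ℕ → R) : R[X] :=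
  X ^ r + ∑ j ∈ Icc 1 r, C (a j) * X ^ (r - j)

lemma Finset.sum_Icc_eq_add_sum_Ico {M : Type*} [AddCommMonoid M] {m n : ℕ} (h : m ≤ n)
    (f : ℕ → M) : ∑ j ∈ Icc m n, f j = f n + ∑ j ∈ Ico m n, f j := by
  rw [Icc_eq_cons_Ico h, sum_cons]

section Algebra

variable {R : Type*} [CommRing R] (r : ℕ) (a : ℕ → R)

@[simp]
lemma eval_monicPoly (z : R) :
    (monicPoly r a).eval z = z ^ r + ∑ j ∈ Icc 1 r, a j * z ^ (r - j) := by
  simp [monicPoly, eval_finsetSum]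

lemma degree_sum_C_mul_X_pow_lt :
    (∑ j ∈ Icc 1 r, C (a j) * X ^ (r - j)).degree < (r : WithBot ℕ) := by
  refine (degree_sum_le _ _).trans_lt ((Finset.sup_lt_iff (WithBot.bot_lt_coe r)).2 ?_)
  intro j hj
  refine (degree_C_mul_X_pow_le _ _).trans_lt ?_
  exact WithBot.coe_lt_coe.2 (Nat.sub_lt_self (mem_Icc.1 hj).1 (mem_Icc.1 hj).2)

lemma monic_monicPoly : (monicPoly r a).Monic :=
  monic_X_pow_add (degree_sum_C_mul_X_pow_lt r a)

lemma natDegree_monicPoly [Nontrivial R] : (monicPoly r a).natDegree = r := by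
  rw [monicPoly, natDegree_add_eq_left_of_degree_lt, natDegree_X_pow]
  simpa using degree_sum_C_mul_X_pow_lt r a

lemma X_mul_derivative_monicPoly :
    X * derivative (monicPoly r a) =
      (r : R[X]) * monicPoly r a - ∑ j ∈ Icc 1 r, C (j * a j) * X ^ (r - j) := by
  have hterm : ∀ j ∈ Icc 1 r, X * derivative (C (a j) * X ^ (r - j)) =
      (r : R[X]) * (C (a j) * X ^ (r - j)) - C (j * a j) * X ^ (r - j) := by
    intro j hj
    obtain ⟨k, rfl⟩ := Nat.exists_eq_add_of_le (mem_Icc.1 hj).2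
    rw [Nat.add_sub_cancel_left, derivative_C_mul_X_pow]
    rcases k with _ | k
    · simp
    · rw [Nat.add_sub_cancel, pow_succ]
      simp only [map_mul, map_add, map_one, map_natCast, Nat.cast_add, Nat.cast_one]
      ring
  rw [monicPoly, derivative_add, derivative_sum, mul_add, mul_sum, sum_congr rfl hterm,
    derivative_X_pow, sum_sub_distrib, mul_add, mul_sum]
  rcases r with _ | r
  · simp
  · simp only [map_natCast, Nat.add_sub_cancel, pow_succ]
    ring

end Algebra

lemma Polynomial.exists_injective_fin_iff_isRoot {K : Type*} [Field K] [IsAlgClosed K]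
    {p : K[X]} {n : ℕ} (hp : p ≠ 0) (hn : p.natDegree = n)
    (hsimple : ∀ z, p.IsRoot z → (derivative p).eval z ≠ 0) :
    ∃ Z : Fin n → K, Function.Injective Z ∧ ∀ z, p.IsRoot z ↔ ∃ i, z = Z i := by
  classical
  have hnodup : p.roots.Nodup := Multiset.nodup_iff_count_le_one.2 fun z => by
    rw [count_roots]
    by_contra! hmult
    obtain ⟨hz, hz'⟩ := (one_lt_rootMultiplicity_iff_isRoot hp).1 hmult
    exact hsimple z hz hz'
  have hcard : #p.roots.toFinset = n := by
    rw [Multiset.toFinset_card_of_nodup hnodup, IsAlgClosed.card_roots_eq_natDegree, hn]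
  let e := Finset.equivFinOfCardEq hcard
  refine ⟨fun i => e.symm i, Subtype.val_injective.comp e.symm.injective, fun z => ⟨?_, ?_⟩⟩
  · exact fun hz => ⟨e ⟨z, Multiset.mem_toFinset.2 ((mem_roots hp).2 hz)⟩, by simp⟩
  · rintro ⟨i, rfl⟩
    exact (mem_roots hp).1 (Multiset.mem_toFinset.1 (e.symm i).2)

section Norm

variable {K : Type*} [NormedField K] {r : ℕ} {a : ℕ → K}

lemma norm_lt_of_pow_add_sum_eq_zero {t : ℝ} (ht0 : 0 < t) (ht1 : t ≤ 1)
    (ha : ∑ j ∈ Icc 1 r, ‖a j‖ < t ^ r) {z : K}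
    (hz : z ^ r + ∑ j ∈ Icc 1 r, a j * z ^ (r - j) = 0) : ‖z‖ < t := by
  by_contra! hzt
  have hpow : ∀ j ∈ Icc 1 r, t ^ r * ‖z‖ ^ (r - j) ≤ ‖z‖ ^ r := by
    intro j hj
    obtain ⟨-, hjr⟩ := mem_Icc.1 hj
    calc t ^ r * ‖z‖ ^ (r - j) ≤ ‖z‖ ^ j * ‖z‖ ^ (r - j) := by
          gcongr
          exact (pow_le_pow_of_le_one ht0.le ht1 hjr).trans (pow_le_pow_left₀ ht0.le hzt j)
      _ = ‖z‖ ^ r := by rw [← pow_add, Nat.add_sub_cancel' hjr]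
  have hzr : 0 < ‖z‖ ^ r := pow_pos (ht0.trans_le hzt) r
  have key : t ^ r * ‖z‖ ^ r < t ^ r * ‖z‖ ^ r := calc
    t ^ r * ‖z‖ ^ r = t ^ r * ‖∑ j ∈ Icc 1 r, a j * z ^ (r - j)‖ := by
        rw [← norm_pow, eq_neg_of_add_eq_zero_left hz, norm_neg]
    _ ≤ t ^ r * ∑ j ∈ Icc 1 r, ‖a j‖ * ‖z‖ ^ (r - j) := by
        gcongr
        exact (norm_sum_le _ _).trans_eq (by simp only [norm_mul, norm_pow])
    _ ≤ ∑ j ∈ Icc 1 r, ‖a j‖ * ‖z‖ ^ r := by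
        rw [mul_sum]
        refine sum_le_sum fun j hj => ?_
        rw [mul_left_comm]
        exact mul_le_mul_of_nonneg_left (hpow j hj) (norm_nonneg _)
    _ < t ^ r * ‖z‖ ^ r := by rw [← sum_mul]; gcongr
  exact lt_irrefl _ key

lemma norm_sum_Ico_mul_pow_le {z : K} (hz : ‖z‖ ≤ 1) (b : ℕ → K) :
    ‖∑ j ∈ Ico 1 r, b j * z ^ (r - j)‖ ≤ ‖z‖ * ∑ j ∈ Ico 1 r, ‖b j‖ := by
  refine (norm_sum_le _ _).trans ?_
  rw [mul_sum]
  refine sum_le_sum fun j hj => ?_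
  rw [norm_mul, norm_pow, mul_comm ‖z‖]
  gcongr
  exact pow_le_of_le_one (norm_nonneg z) hz (Nat.sub_ne_zero_of_lt (mem_Ico.1 hj).2)

lemma norm_pow_add_le_of_pow_add_sum_eq_zero (hr : 1 ≤ r) {z : K} (hz1 : ‖z‖ ≤ 1)
    (hz : z ^ r + ∑ j ∈ Icc 1 r, a j * z ^ (r - j) = 0) :
    ‖z ^ r + a r‖ ≤ ‖z‖ * ∑ j ∈ Ico 1 r, ‖a j‖ := by
  rw [sum_Icc_eq_add_sum_Ico hr, Nat.sub_self, pow_zero, mul_one, ← add_assoc] at hz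
  rw [eq_neg_of_add_eq_zero_left hz, norm_neg]
  exact norm_sum_Ico_mul_pow_le hz1 a

end Norm

lemma eval_derivative_monicPoly_ne_zero {K : Type*} [RCLike K] {r : ℕ} (hr : 1 ≤ r)
    {a : ℕ → K} {z : K} (hz1 : ‖z‖ ≤ 1) (hsmall : ‖z‖ * ∑ j ∈ Ico 1 r, ‖a j‖ < ‖a r‖)
    (hz : (monicPoly r a).IsRoot z) : (derivative (monicPoly r a)).eval z ≠ 0 := by
  intro hz'
  have hweighted : ∑ j ∈ Icc 1 r, (j * a j) * z ^ (r - j) = 0 := by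
    have := congrArg (eval z) (X_mul_derivative_monicPoly r a)
    simp only [eval_mul, eval_X, hz', eval_natCast, hz.eq_zero, eval_sub, eval_finsetSum,
      eval_C, eval_pow, mul_zero, zero_sub] at this
    exact neg_eq_zero.1 this.symm
  rw [sum_Icc_eq_add_sum_Ico hr, Nat.sub_self, pow_zero, mul_one] at hweighted
  have key : (r : ℝ) * ‖a r‖ ≤ r * (‖z‖ * ∑ j ∈ Ico 1 r, ‖a j‖) := calc
    (r : ℝ) * ‖a r‖ = ‖∑ j ∈ Ico 1 r, (j * a j) * z ^ (r - j)‖ := by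
        rw [eq_neg_of_add_eq_zero_right hweighted, norm_neg, norm_mul, RCLike.norm_natCast]
    _ ≤ ‖z‖ * ∑ j ∈ Ico 1 r, ‖(j : K) * a j‖ := norm_sum_Ico_mul_pow_le hz1 _
    _ ≤ ‖z‖ * ∑ j ∈ Ico 1 r, (r : ℝ) * ‖a j‖ := by
        gcongr with j hj
        rw [norm_mul, RCLike.norm_natCast]
        gcongr
        exact_mod_cast (mem_Ico.1 hj).2.le
    _ = r * (‖z‖ * ∑ j ∈ Ico 1 r, ‖a j‖) := by rw [← mul_sum]; ring
  have hr0 : (0 : ℝ) < r := by exact_mod_cast hr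
  exact (mul_lt_mul_of_pos_left hsmall hr0).not_ge key

theorem exists_fin_distinct_roots_and_norm_pow_add_le {r : ℕ} (hr : 1 ≤ r) {a : ℕ → ℂ}
    {t e : ℝ} (ht0 : 0 < t) (ht1 : t ≤ 1) (ha : ∑ j ∈ Icc 1 r, ‖a j‖ < t ^ r) {w : ℂ}
    (he : t * ∑ j ∈ Ico 1 r, ‖a j‖ + ‖a r - w‖ ≤ e)
    (hw : t * ∑ j ∈ Ico 1 r, ‖a j‖ + ‖a r - w‖ < ‖w‖) :
    (∃ Z : Fin r → ℂ, Function.Injective Z ∧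
        (∀ i, Z i ^ r + ∑ j ∈ Icc 1 r, a j * Z i ^ (r - j) = 0) ∧
        (∀ z : ℂ, z ^ r + ∑ j ∈ Icc 1 r, a j * z ^ (r - j) = 0 → ∃ i, z = Z i)) ∧
      (∀ z : ℂ, z ^ r + ∑ j ∈ Icc 1 r, a j * z ^ (r - j) = 0 → ‖z ^ r + w‖ ≤ e) := by
  have hsmall : ∀ z : ℂ, z ^ r + ∑ j ∈ Icc 1 r, a j * z ^ (r - j) = 0 →
      ‖z‖ * ∑ j ∈ Ico 1 r, ‖a j‖ ≤ t * ∑ j ∈ Ico 1 r, ‖a j‖ := fun z hz =>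
    mul_le_mul_of_nonneg_right (norm_lt_of_pow_add_sum_eq_zero ht0 ht1 ha hz).le
      (sum_nonneg fun _ _ => norm_nonneg _)
  have hle_one : ∀ z : ℂ, z ^ r + ∑ j ∈ Icc 1 r, a j * z ^ (r - j) = 0 → ‖z‖ ≤ 1 :=
    fun z hz => (norm_lt_of_pow_add_sum_eq_zero ht0 ht1 ha hz).le.trans ht1
  have hsimple : ∀ z, (monicPoly r a).IsRoot z → (derivative (monicPoly r a)).eval z ≠ 0 := by
    intro z hz
    have hz₀ : z ^ r + ∑ j ∈ Icc 1 r, a j * z ^ (r - j) = 0 := by simpa using hz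
    refine eval_derivative_monicPoly_ne_zero hr (hle_one z hz₀) ?_ hz
    linarith [hsmall z hz₀, norm_sub_norm_le w (a r), norm_sub_rev w (a r)]
  obtain ⟨Z, hZ, hroots⟩ := exists_injective_fin_iff_isRoot (monic_monicPoly r a).ne_zero
    (natDegree_monicPoly r a) hsimple
  simp only [IsRoot, eval_monicPoly] at hroots
  refine ⟨⟨Z, hZ, fun i => (hroots _).2 ⟨i, rfl⟩, fun z hz => (hroots z).1 hz⟩, fun z hz => ?_⟩
  calc ‖z ^ r + w‖ = ‖(z ^ r + a r) - (a r - w)‖ := by ring_nf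
    _ ≤ ‖z ^ r + a r‖ + ‖a r - w‖ := norm_sub_le _ _
    _ ≤ t * ∑ j ∈ Ico 1 r, ‖a j‖ + ‖a r - w‖ := by
        gcongr
        exact (norm_pow_add_le_of_pow_add_sum_eq_zero hr (hle_one z hz) hz).trans (hsmall z hz)
    _ ≤ e := he

section Asymptotics

variable {𝕜 : Type*} [NontriviallyNormedField 𝕜]

lemma eventually_norm_sub_mul_deriv_le {f : 𝕜 → 𝕜} (hf : DifferentiableAt 𝕜 f 0)
    (hf0 : f 0 = 0) {η : ℝ} (hη : 0 < η) :
    ∀ᶠ ζ in 𝓝 0, ‖f ζ - ζ * deriv f 0‖ ≤ η * ‖ζ‖ := by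
  simpa [hf0] using (hasDerivAt_iff_isLittleO.1 hf.hasDerivAt).def hη

lemma isBigO_sum_norm_id {ι : Type*} (s : Finset ι) {f : ι → 𝕜 → 𝕜}
    (hf : ∀ j ∈ s, DifferentiableAt 𝕜 (f j) 0) (hf0 : ∀ j ∈ s, f j 0 = 0) :
    (fun ζ => ∑ j ∈ s, ‖f j ζ‖) =O[𝓝 0] fun ζ => ζ := by
  refine IsBigO.fun_sum fun j hj => ?_
  simpa [hf0 j hj] using (hf j hj).hasDerivAt.isBigO_sub

end Asymptotics

/-- Roots of a monic polynomial family near a simple degenerate point.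
Let `P(z,ζ) = z^r + h_1(ζ) z^{r−1} + ⋯ + h_r(ζ)` with the `h_j` analytic near `0`,
`h_j(0) = 0` and `h_r'(0) ≠ 0`. Then for every `ε > 0` there is `δ > 0` such that for all
`0 < |ζ| < δ` the polynomial `P(·,ζ)` has exactly `r` pairwise distinct roots, and every
root `z` satisfies `|z^r + ζ·h_r'(0)| ≤ ε |ζ|`. -/
theorem statement13 (r : ℕ) (hr : 1 ≤ r) (h : ℕ → ℂ → ℂ)
    (han : ∀ j, 1 ≤ j → j ≤ r → AnalyticAt ℂ (h j) 0)
    (h0 : ∀ j, 1 ≤ j → j ≤ r → h j 0 = 0)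
    (hd : deriv (h r) 0 ≠ 0) :
    ∀ ε > (0:ℝ), ∃ δ > (0:ℝ), ∀ ζ : ℂ, ζ ≠ 0 → ‖ζ‖ < δ →
      (∃ Z : Fin r → ℂ, Function.Injective Z ∧
        (∀ i, Z i ^ r + ∑ j ∈ Finset.Icc 1 r, h j ζ * Z i ^ (r - j) = 0) ∧
        (∀ z : ℂ, z ^ r + ∑ j ∈ Finset.Icc 1 r, h j ζ * z ^ (r - j) = 0 →
          ∃ i, z = Z i)) ∧
      (∀ z : ℂ, z ^ r + ∑ j ∈ Finset.Icc 1 r, h j ζ * z ^ (r - j) = 0 →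
        ‖z ^ r + ζ * deriv (h r) 0‖ ≤ ε * ‖ζ‖) := by
  intro ε hε
  set c := deriv (h r) 0
  have hc : 0 < ‖c‖ := norm_pos_iff.2 hd
  have hr_mem : r ∈ Icc 1 r := mem_Icc.2 ⟨hr, le_rfl⟩
  have hdiff : ∀ j ∈ Icc 1 r, DifferentiableAt ℂ (h j) 0 := fun j hj =>
    (han j (mem_Icc.1 hj).1 (mem_Icc.1 hj).2).differentiableAt
  have hzero : ∀ j ∈ Icc 1 r, h j 0 = 0 := fun j hj => h0 j (mem_Icc.1 hj).1 (mem_Icc.1 hj).2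
  have hbigO := isBigO_sum_norm_id (Icc 1 r) hdiff hzero
  obtain ⟨K, hK, hKbound⟩ := hbigO.exists_pos
  -- `2 η ≤ ε` gives the estimate and `2 η < ‖c‖` separates the roots.
  set η := min (ε / 2) (‖c‖ / 3)
  set t := min 1 (η / K)
  have hη : 0 < η := lt_min (by positivity) (by positivity)
  have ht : 0 < t := lt_min one_pos (by positivity)
  have htK : t * K ≤ η :=
    (mul_le_mul_of_nonneg_right (min_le_right _ _) hK.le).trans_eq (div_mul_cancel₀ η hK.ne')
  obtain ⟨δ, hδ, hζ⟩ := Metric.eventually_nhds_iff.1 <| hKbound.bound.and <|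
    ((hbigO.trans_tendsto tendsto_id).eventually_lt_const (pow_pos ht r)).and <|
    eventually_norm_sub_mul_deriv_le (hdiff r hr_mem) (hzero r hr_mem) hη
  refine ⟨δ, hδ, fun ζ hζ0 hζδ => ?_⟩
  obtain ⟨hsumK, hsum, hlin⟩ := hζ (by simpa using hζδ)
  have hζpos : 0 < ‖ζ‖ := norm_pos_iff.2 hζ0
  have hIco : ∑ j ∈ Ico 1 r, ‖h j ζ‖ ≤ K * ‖ζ‖ :=
    (sum_le_sum_of_subset_of_nonneg Ico_subset_Icc_self fun _ _ _ => norm_nonneg _).trans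
      ((le_abs_self _).trans hsumK)
  have hE : t * ∑ j ∈ Ico 1 r, ‖h j ζ‖ + ‖h r ζ - ζ * c‖ ≤ 2 * η * ‖ζ‖ := by
    nlinarith [mul_le_mul_of_nonneg_left hIco ht.le]
  refine exists_fin_distinct_roots_and_norm_pow_add_le hr ht (min_le_left _ _) hsum
    (hE.trans ?_) (hE.trans_lt ?_)
  · nlinarith [min_le_left (ε / 2) (‖c‖ / 3)]
  · rw [norm_mul]
    nlinarith [min_le_right (ε / 2) (‖c‖ / 3)]
end

section
/- Let B ∈ L¹((0,1); ℝ) with B(x) > 0 for a.e. x ∈ (0,1), and let z ∈ ℂ with z² ∉ ℝ. Then: (i) φ(x, z; B) ≠ 0 for all x ∈ [0,1]; (ii) the ratio ∂ₓφ(x, z; B) / φ(x, z; B) is not a real number for any x ∈ (0,1]; (iii) for every ξ ∈ (−π, π], the set { x ∈ [0,1] : φ(x, z; B) ∈ { e^{iξ} t : t > 0 } } is finite. -/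
open MeasureTheory Set Complex intervalIntegral

noncomputable section

/-- `y` (with derivative `y'`) is the Carathéodory solution `φ(·, z; B)` of
`y'' = −z² B y` with `y(0) = 1`, `y'(0) = 0`, for `B ∈ L¹((0,1))`:
`y` is continuous, `y'(x) = −z² ∫₀ˣ B y`, and `y(x) = 1 + ∫₀ˣ y'`. -/
def IsPhiL1 (B : ℝ → ℂ) (z : ℂ) (y y' : ℝ → ℂ) : Prop :=
  ContinuousOn y (Set.Icc 0 1) ∧
  (∀ x ∈ Set.Icc (0:ℝ) 1, y' x = -(z^2) * ∫ s in (0:ℝ)..x, B s * y s) ∧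
  (∀ x ∈ Set.Icc (0:ℝ) 1, y x = 1 + ∫ s in (0:ℝ)..x, y' s)

/-- Triangle Fubini: swap the order of integration over `{0 < s < τ ≤ x}`. -/
lemma triangle_swap {x : ℝ} (hx : 0 ≤ x) {f h : ℝ → ℂ}
    (hf : IntegrableOn f (Ioc 0 x)) (hh : ContinuousOn h (Icc 0 x)) :
    ∫ s in (0:ℝ)..x, f s * (∫ τ in s..x, h τ) =
      ∫ τ in (0:ℝ)..x, h τ * (∫ s in (0:ℝ)..τ, f s) := by
  set μ := volume.restrict (Ioc (0:ℝ) x) with hμ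
  have hH : Integrable h μ := (hh.integrableOn_Icc).mono_set Ioc_subset_Icc_self
  have hK0 : Integrable (fun p : ℝ × ℝ => f p.1 * h p.2) (μ.prod μ) :=
    hf.mul_prod hH
  have hmeas : MeasurableSet {p : ℝ × ℝ | p.1 < p.2} :=
    measurableSet_lt measurable_fst measurable_snd
  have hK : Integrable ({p : ℝ × ℝ | p.1 < p.2}.indicator
      (fun p : ℝ × ℝ => f p.1 * h p.2)) (μ.prod μ) := hK0.indicator hmeas
  have swap := MeasureTheory.integral_integral_swap
    (f := fun s τ => {p : ℝ × ℝ | p.1 < p.2}.indicator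
      (fun p : ℝ × ℝ => f p.1 * h p.2) (s, τ)) (μ := μ) (ν := μ) (by exact hK)
  have hL : ∫ s, (∫ τ, {p : ℝ × ℝ | p.1 < p.2}.indicator
        (fun p : ℝ × ℝ => f p.1 * h p.2) (s, τ) ∂μ) ∂μ
      = ∫ s in (0:ℝ)..x, f s * (∫ τ in s..x, h τ) := by
    rw [intervalIntegral.integral_of_le hx, hμ]
    refine setIntegral_congr_fun measurableSet_Ioc (fun s hs => ?_)
    have h1 : ∀ τ : ℝ, {p : ℝ × ℝ | p.1 < p.2}.indicator
        (fun p : ℝ × ℝ => f p.1 * h p.2) (s, τ)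
        = (Ioi s).indicator (fun τ => f s * h τ) τ := by
      intro τ
      by_cases hsτ : s < τ
      · rw [Set.indicator_of_mem (by exact hsτ), Set.indicator_of_mem (by exact hsτ)]
      · rw [Set.indicator_of_notMem (by exact hsτ), Set.indicator_of_notMem (by exact hsτ)]
    simp_rw [h1]
    rw [setIntegral_indicator measurableSet_Ioi]
    have h2 : Ioc (0:ℝ) x ∩ Ioi s = Ioc s x := by
      ext τ; simp only [mem_inter_iff, mem_Ioc, mem_Ioi]
      exact ⟨fun ⟨⟨_, h2⟩, h3⟩ => ⟨h3, h2⟩, fun ⟨h1', h2⟩ => ⟨⟨hs.1.trans h1', h2⟩, h1'⟩⟩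
    rw [h2, intervalIntegral.integral_of_le hs.2, MeasureTheory.integral_const_mul]
  have hR : ∫ τ, (∫ s, {p : ℝ × ℝ | p.1 < p.2}.indicator
        (fun p : ℝ × ℝ => f p.1 * h p.2) (s, τ) ∂μ) ∂μ
      = ∫ τ in (0:ℝ)..x, h τ * (∫ s in (0:ℝ)..τ, f s) := by
    rw [intervalIntegral.integral_of_le hx, hμ]
    refine setIntegral_congr_fun measurableSet_Ioc (fun τ hτ => ?_)
    have h1 : ∀ s : ℝ, {p : ℝ × ℝ | p.1 < p.2}.indicator
        (fun p : ℝ × ℝ => f p.1 * h p.2) (s, τ)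
        = (Iio τ).indicator (fun s => f s * h τ) s := by
      intro s
      by_cases hsτ : s < τ
      · rw [Set.indicator_of_mem (by exact hsτ), Set.indicator_of_mem (by exact hsτ)]
      · rw [Set.indicator_of_notMem (by exact hsτ), Set.indicator_of_notMem (by exact hsτ)]
    simp_rw [h1]
    rw [setIntegral_indicator measurableSet_Iio]
    have h2 : Ioc (0:ℝ) x ∩ Iio τ = Ioo 0 τ := by
      ext s; simp only [mem_inter_iff, mem_Ioc, mem_Iio, mem_Ioo]
      exact ⟨fun ⟨⟨h1', _⟩, h3⟩ => ⟨h1', h3⟩, fun ⟨h1', h2'⟩ => ⟨⟨h1', h2'.le.trans hτ.2⟩, h2'⟩⟩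
    rw [h2, ← integral_Ioc_eq_integral_Ioo, intervalIntegral.integral_of_le hτ.1.le,
      MeasureTheory.integral_mul_const]
    ring
  rw [← hL, ← hR]
  exact swap

/-- integrability of `B • w` for continuous `w` -/
lemma aux_int {B : ℝ → ℝ} (hB : IntegrableOn B (Set.Ioo 0 1)) {w : ℝ → ℂ}
    (hw : ContinuousOn w (Icc 0 1)) :
    IntegrableOn (fun s => ((B s : ℝ) : ℂ) * w s) (Icc 0 1) volume := by
  have hBc : IntegrableOn (fun s => ((B s : ℝ) : ℂ)) (Icc 0 1) volume := by
    have h1 : IntegrableOn B (Icc 0 1) volume := by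
      rwa [integrableOn_Icc_iff_integrableOn_Ioo]
    exact h1.ofReal
  obtain ⟨C, hC⟩ := isCompact_Icc.exists_bound_of_continuousOn hw
  have := Integrable.bdd_mul (f := w) (g := fun s => ((B s : ℝ) : ℂ)) (c := C)
    hBc (hw.aestronglyMeasurable measurableSet_Icc)
    (((ae_restrict_iff' measurableSet_Icc).mpr (Filter.Eventually.of_forall hC)))
  exact this.congr (Filter.Eventually.of_forall (fun s => mul_comm _ _))

lemma aux_int_real {B : ℝ → ℝ} (hB : IntegrableOn B (Set.Ioo 0 1)) {w : ℝ → ℝ}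
    (hw : ContinuousOn w (Icc 0 1)) :
    IntegrableOn (fun s => B s * w s) (Icc 0 1) volume := by
  have h1 : IntegrableOn B (Icc 0 1) volume := by
    rwa [integrableOn_Icc_iff_integrableOn_Ioo]
  obtain ⟨C, hC⟩ := isCompact_Icc.exists_bound_of_continuousOn hw
  have := Integrable.bdd_mul (f := w) (g := B) (c := C)
    h1 (hw.aestronglyMeasurable measurableSet_Icc)
    (((ae_restrict_iff' measurableSet_Icc).mpr (Filter.Eventually.of_forall hC)))
  exact this.congr (Filter.Eventually.of_forall (fun s => mul_comm _ _))

/-- Values of `φ` for positive `B` and non-real `z²`.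
Let `B ∈ L¹((0,1);ℝ)` with `B > 0` a.e. and `z² ∉ ℝ`. Then `φ(·,z;B)` has no zeroes in
`[0,1]`; `∂ₓφ/φ` is never real on `(0,1]`; and for each `ξ ∈ (−π,π]` the set of
`x ∈ [0,1]` with `φ(x,z;B)` on the ray `e^{iξ} ℝ₊` is finite. -/
theorem statement16 (B : ℝ → ℝ)
    (hB : IntegrableOn B (Set.Ioo 0 1))
    (hpos : ∀ᵐ x ∂mu01, 0 < B x)
    (z : ℂ) (hz : (z^2).im ≠ 0) :
    ∀ y y' : ℝ → ℂ, IsPhiL1 (fun x => ((B x : ℝ) : ℂ)) z y y' →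
      (∀ x ∈ Set.Icc (0:ℝ) 1, y x ≠ 0) ∧
      (∀ x ∈ Set.Ioc (0:ℝ) 1, (y' x / y x).im ≠ 0) ∧
      (∀ ξ ∈ Set.Ioc (-Real.pi) Real.pi,
        {x ∈ Set.Icc (0:ℝ) 1 | ∃ t : ℝ, 0 < t ∧
          y x = Complex.exp ((ξ : ℂ) * Complex.I) * (t : ℂ)}.Finite) := by
  intro y y' hy
  obtain ⟨hc, hdf, hif⟩ := hy
  have hpos' : ∀ᵐ x ∂(volume.restrict (Set.Ioo 0 1)), 0 < B x := hpos
  have hBpos' : ∀ᵐ s ∂(volume : Measure ℝ), s ∈ Ioo (0:ℝ) 1 → 0 < B s :=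
    (ae_restrict_iff' measurableSet_Ioo).mp hpos'
  have h01 : (0:ℝ) ∈ Icc (0:ℝ) 1 := ⟨le_refl 0, zero_le_one⟩
  have hy0 : y 0 = 1 := by simpa using hif 0 h01
  have huIcc : ∀ {a b : ℝ}, a ∈ Icc (0:ℝ) 1 → b ∈ Icc (0:ℝ) 1 → uIcc a b ⊆ Icc 0 1 := by
    intro a b ha hb
    rw [show Icc (0:ℝ) 1 = uIcc 0 1 from (uIcc_of_le zero_le_one).symm]
    rw [show Icc (0:ℝ) 1 = uIcc 0 1 from (uIcc_of_le zero_le_one).symm] at ha hb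
    exact uIcc_subset_uIcc ha hb
  have hBw : ∀ (w : ℝ → ℂ), ContinuousOn w (Icc 0 1) → ∀ {a b : ℝ}, a ∈ Icc (0:ℝ) 1 →
      b ∈ Icc (0:ℝ) 1 →
      IntervalIntegrable (fun s => ((B s : ℝ) : ℂ) * w s) volume a b := by
    intro w hw a b ha hb
    exact ((aux_int hB hw).mono_set (huIcc ha hb)).intervalIntegrable
  -- continuity of the primitive g and of y'
  set g : ℝ → ℂ := fun u => ∫ s in (0:ℝ)..u, ((B s:ℝ):ℂ) * y s with hgdef
  have hgc : ContinuousOn g (Icc 0 1) := by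
    have h1 : IntegrableOn (fun s => ((B s:ℝ):ℂ) * y s) (uIcc (0:ℝ) 1) volume := by
      rw [uIcc_of_le zero_le_one]; exact aux_int hB hc
    have := intervalIntegral.continuousOn_primitive_interval (μ := volume) h1
    rwa [uIcc_of_le zero_le_one] at this
  have hy'c : ContinuousOn y' (Icc 0 1) :=
    (continuousOn_const.mul hgc).congr (fun u hu => hdf u hu)
  have hy'int : ∀ {a b : ℝ}, a ∈ Icc (0:ℝ) 1 → b ∈ Icc (0:ℝ) 1 →
      IntervalIntegrable y' volume a b :=
    fun ha hb => ((hy'c.mono (huIcc ha hb))).intervalIntegrable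
  set cy' : ℝ → ℂ := fun τ => (starRingEnd ℂ) (y' τ) with hcy'def
  have hcy'c : ContinuousOn cy' (Icc 0 1) := continuous_star.comp_continuousOn hy'c
  have hcy'int : ∀ {a b : ℝ}, a ∈ Icc (0:ℝ) 1 → b ∈ Icc (0:ℝ) 1 →
      IntervalIntegrable cy' volume a b :=
    fun ha hb => ((hcy'c.mono (huIcc ha hb))).intervalIntegrable
  set ρ : ℝ → ℝ := fun u => ∫ s in (0:ℝ)..u, B s * Complex.normSq (y s) with hρdef
  have hdf' : ∀ u ∈ Icc (0:ℝ) 1, y' u = -(z^2) * g u := hdf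
  -- The key identity for the imaginary part of conj(y) * y'
  have imW : ∀ x ∈ Icc (0:ℝ) 1, ((starRingEnd ℂ) (y x) * y' x).im = -(z^2).im * ρ x := by
    intro x hx
    have hx0 : (0:ℝ) ≤ x := hx.1
    have hIccsub : Icc (0:ℝ) x ⊆ Icc 0 1 := Icc_subset_Icc le_rfl hx.2
    have hfI : IntegrableOn (fun s => ((B s:ℝ):ℂ) * y s) (Ioc 0 x) volume :=
      (aux_int hB hc).mono_set ((Ioc_subset_Icc_self).trans hIccsub)
    set F : ℝ → ℂ := fun s => ∫ τ in s..x, cy' τ with hFdef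
    have hFeq : ∀ s ∈ Icc (0:ℝ) 1,
        F s = (∫ τ in (0:ℝ)..x, cy' τ) - ∫ τ in (0:ℝ)..s, cy' τ := by
      intro s hs
      exact (integral_interval_sub_left (hcy'int h01 hx) (hcy'int h01 hs)).symm
    have hFc : ContinuousOn F (Icc 0 1) := by
      have hPc : ContinuousOn (fun s => ∫ τ in (0:ℝ)..s, cy' τ) (Icc 0 1) := by
        have h1 : IntegrableOn cy' (uIcc (0:ℝ) 1) volume := by
          rw [uIcc_of_le zero_le_one]
          exact (hcy'c.mono (by rfl)).integrableOn_Icc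
        have := intervalIntegral.continuousOn_primitive_interval (μ := volume) h1
        rwa [uIcc_of_le zero_le_one] at this
      exact (continuousOn_const.sub hPc).congr hFeq
    have hconjdiff : ∀ s ∈ Icc (0:ℝ) x,
        (starRingEnd ℂ) (y x) = (starRingEnd ℂ) (y s) + F s := by
      intro s hs
      have hsIcc : s ∈ Icc (0:ℝ) 1 := hIccsub hs
      have hdiff : y x - y s = ∫ τ in s..x, y' τ := by
        have h1 := integral_interval_sub_left (hy'int h01 hx) (hy'int h01 hsIcc)
        rw [hif x hx, hif s hsIcc]
        rw [← h1]; ring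
      have hconjint : (starRingEnd ℂ) (∫ τ in s..x, y' τ) = F s := by
        rw [hFdef]
        simp only []
        rw [intervalIntegral.integral_of_le hs.2, intervalIntegral.integral_of_le hs.2,
          ← integral_conj]
      have h2 := congrArg (starRingEnd ℂ) hdiff
      rw [map_sub, hconjint] at h2
      linear_combination h2
    have key : (starRingEnd ℂ) (y x) * y' x
        = -(z^2) * ((ρ x : ℝ) : ℂ) + ∫ τ in (0:ℝ)..x, cy' τ * y' τ := by
      have e1 : (starRingEnd ℂ) (y x) * y' x
          = -(z^2) * ∫ s in (0:ℝ)..x, (((B s:ℝ):ℂ) * y s) * (starRingEnd ℂ) (y x) := by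
        have e1b : (∫ s in (0:ℝ)..x, (((B s:ℝ):ℂ) * y s) * (starRingEnd ℂ) (y x))
            = g x * (starRingEnd ℂ) (y x) := intervalIntegral.integral_mul_const _ _
        rw [hdf' x hx, e1b]
        ring
      have int1 : IntervalIntegrable
          (fun s => ((B s:ℝ):ℂ) * (y s * (starRingEnd ℂ) (y s))) volume 0 x :=
        hBw (fun s => y s * (starRingEnd ℂ) (y s))
          (hc.mul (continuous_star.comp_continuousOn hc)) h01 hx
      have int2 : IntervalIntegrable (fun s => ((B s:ℝ):ℂ) * (y s * F s)) volume 0 x :=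
        hBw (fun s => y s * F s) (hc.mul hFc) h01 hx
      have e2 : ∫ s in (0:ℝ)..x, (((B s:ℝ):ℂ) * y s) * (starRingEnd ℂ) (y x)
          = (∫ s in (0:ℝ)..x, ((B s:ℝ):ℂ) * (y s * (starRingEnd ℂ) (y s)))
            + ∫ s in (0:ℝ)..x, (((B s:ℝ):ℂ)) * (y s * F s) := by
        rw [← intervalIntegral.integral_add int1 int2]
        apply intervalIntegral.integral_congr
        intro s hs
        have hs' : s ∈ Icc (0:ℝ) x := by rwa [uIcc_of_le hx0] at hs
        show ((B s:ℝ):ℂ) * y s * (starRingEnd ℂ) (y x)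
          = ((B s:ℝ):ℂ) * (y s * (starRingEnd ℂ) (y s)) + ((B s:ℝ):ℂ) * (y s * F s)
        rw [hconjdiff s hs']
        ring
      have e3 : ∫ s in (0:ℝ)..x, (((B s:ℝ):ℂ)) * (y s * F s)
          = ∫ τ in (0:ℝ)..x, cy' τ * g τ := by
        have e3a : ∫ s in (0:ℝ)..x, (((B s:ℝ):ℂ)) * (y s * F s)
            = ∫ s in (0:ℝ)..x, (((B s:ℝ):ℂ) * y s) * (∫ τ in s..x, cy' τ) :=
          intervalIntegral.integral_congr (fun s _ => by
            show ((B s:ℝ):ℂ) * (y s * F s) = ((B s:ℝ):ℂ) * y s * F s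
            ring)
        rw [e3a]
        exact triangle_swap hx0 hfI (hcy'c.mono hIccsub)
      have e4 : -(z^2) * ∫ τ in (0:ℝ)..x, cy' τ * g τ
          = ∫ τ in (0:ℝ)..x, cy' τ * y' τ := by
        rw [← intervalIntegral.integral_const_mul]
        apply intervalIntegral.integral_congr
        intro τ hτ
        have hτ' : τ ∈ Icc (0:ℝ) 1 := hIccsub (by rwa [uIcc_of_le hx0] at hτ)
        show -(z^2) * (cy' τ * g τ) = cy' τ * y' τ
        rw [hdf' τ hτ']
        ring
      have e5 : ∫ s in (0:ℝ)..x, ((B s:ℝ):ℂ) * (y s * (starRingEnd ℂ) (y s))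
          = ((ρ x : ℝ) : ℂ) := by
        rw [hρdef]
        simp only []
        rw [← intervalIntegral.integral_ofReal]
        apply intervalIntegral.integral_congr
        intro s _
        show ((B s:ℝ):ℂ) * (y s * (starRingEnd ℂ) (y s)) = ((B s * Complex.normSq (y s) : ℝ) : ℂ)
        rw [Complex.mul_conj]
        push_cast
        ring
      rw [e1, e2, e3, mul_add, e5, e4]
    rw [key]
    have e6 : (∫ τ in (0:ℝ)..x, cy' τ * y' τ)
        = ((∫ τ in (0:ℝ)..x, Complex.normSq (y' τ) : ℝ) : ℂ) := by
      rw [← intervalIntegral.integral_ofReal]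
      apply intervalIntegral.integral_congr
      intro τ _
      show cy' τ * y' τ = ((Complex.normSq (y' τ) : ℝ) : ℂ)
      rw [hcy'def]
      show (starRingEnd ℂ) (y' τ) * y' τ = ((Complex.normSq (y' τ) : ℝ) : ℂ)
      rw [mul_comm, Complex.mul_conj]
    rw [e6]
    simp [Complex.add_im, Complex.mul_im, Complex.ofReal_im, Complex.ofReal_re]
  -- positivity of ρ
  have hρpos : ∀ x ∈ Ioc (0:ℝ) 1, 0 < ρ x := by
    intro x hx
    have hx0 : (0:ℝ) < x := hx.1
    have hIoc1 : Ioc (0:ℝ) x ⊆ Icc 0 1 := fun s hs => ⟨hs.1.le, hs.2.trans hx.2⟩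
    have hnsq : Continuous (fun w : ℂ => Complex.normSq w) := by
      simp only [Complex.normSq_apply]
      exact (Complex.continuous_re.mul Complex.continuous_re).add
        (Complex.continuous_im.mul Complex.continuous_im)
    have hint : IntegrableOn (fun s => B s * Complex.normSq (y s)) (Ioc 0 x) volume :=
      (aux_int_real hB (hnsq.comp_continuousOn hc)).mono_set hIoc1
    have haeB : ∀ᵐ s ∂(volume.restrict (Ioc (0:ℝ) x)), 0 < B s := by
      have h1 : ∀ᵐ s ∂(volume.restrict (Ioc (0:ℝ) x)), s ∈ Ioo (0:ℝ) 1 → 0 < B s :=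
        ae_restrict_of_ae hBpos'
      have h2 : ∀ᵐ s ∂(volume.restrict (Ioc (0:ℝ) x)), s ∈ Ioc (0:ℝ) x :=
        ae_restrict_mem measurableSet_Ioc
      have h3 : ∀ᵐ s ∂(volume.restrict (Ioc (0:ℝ) x)), s ≠ x := by
        rw [ae_iff]
        simp only [ne_eq, not_not]
        have hss : {s : ℝ | s = x} = {x} := by ext; simp
        rw [hss, Measure.restrict_apply' measurableSet_Ioc]
        exact measure_mono_null inter_subset_left (Real.volume_singleton)
      filter_upwards [h1, h2, h3] with s hs1 hs2 hs3
      apply hs1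
      rcases lt_or_eq_of_le (hs2.2.trans hx.2) with h | h
      · exact ⟨hs2.1, h⟩
      · exfalso
        exact hs3 (le_antisymm hs2.2 (h ▸ hx.2))
    have hae0 : ∀ᵐ s ∂(volume.restrict (Ioc (0:ℝ) x)),
        0 ≤ B s * Complex.normSq (y s) :=
      haeB.mono (fun s hs => mul_nonneg hs.le (Complex.normSq_nonneg _))
    have hne : ρ x ≠ 0 := by
      intro h0
      have h0' : ∫ s in Ioc (0:ℝ) x, B s * Complex.normSq (y s) = 0 := by
        rw [← intervalIntegral.integral_of_le hx0.le]
        exact h0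
      have hzero := (MeasureTheory.integral_eq_zero_iff_of_nonneg_ae hae0 hint).mp h0'
      have hynull : ∀ᵐ s ∂(volume.restrict (Ioc (0:ℝ) x)), y s = 0 := by
        have hz' : ∀ᵐ s ∂(volume.restrict (Ioc (0:ℝ) x)),
            B s * Complex.normSq (y s) = 0 := hzero
        filter_upwards [hz', haeB] with s hs1 hs2
        rcases mul_eq_zero.mp hs1 with h | h
        · exact absurd h (ne_of_gt hs2)
        · exact Complex.normSq_eq_zero.mp h
      have hcw : ContinuousWithinAt y (Icc 0 1) 0 := hc 0 h01
      obtain ⟨δ, hδ0, hδ⟩ := Metric.continuousWithinAt_iff.mp hcw (1/2) (by norm_num)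
      set δ' := min (δ/2) x with hδ'def
      have hδ'0 : 0 < δ' := lt_min (by linarith) hx0
      have hsub : Ioc (0:ℝ) δ' ⊆ Ioc 0 x := Ioc_subset_Ioc le_rfl (min_le_right _ _)
      have hynull' : ∀ᵐ s ∂(volume.restrict (Ioc (0:ℝ) δ')), y s = 0 :=
        ae_restrict_of_ae_restrict_of_subset hsub hynull
      have hmem : ∀ᵐ s ∂(volume.restrict (Ioc (0:ℝ) δ')), s ∈ Ioc (0:ℝ) δ' :=
        ae_restrict_mem measurableSet_Ioc
      have hNB : (ae (volume.restrict (Ioc (0:ℝ) δ'))).NeBot := by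
        refine ae_neBot.mpr ?_
        intro hcontra
        rw [Measure.restrict_eq_zero, Real.volume_Ioc] at hcontra
        rw [ENNReal.ofReal_eq_zero] at hcontra
        linarith
      obtain ⟨s, hs1, hs2⟩ := (hynull'.and hmem).exists
      have hsIcc : s ∈ Icc (0:ℝ) 1 :=
        ⟨hs2.1.le, (hs2.2.trans (min_le_right _ _)).trans hx.2⟩
      have hdist : dist s 0 < δ := by
        rw [Real.dist_eq, sub_zero, abs_of_pos hs2.1]
        have h4 := hs2.2
        have h5 : δ' ≤ δ/2 := min_le_left _ _
        linarith
      have := hδ hsIcc hdist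
      rw [hs1, hy0] at this
      rw [dist_eq_norm] at this
      simp at this
      norm_num at this
    have hge : 0 ≤ ρ x := by
      have : 0 ≤ ∫ s in Ioc (0:ℝ) x, B s * Complex.normSq (y s) :=
        integral_nonneg_of_ae hae0
      rwa [← intervalIntegral.integral_of_le hx0.le] at this
    exact lt_of_le_of_ne hge (Ne.symm hne)
  -- part (i)
  have part1 : ∀ x ∈ Icc (0:ℝ) 1, y x ≠ 0 := by
    intro x hx h0
    have hx0 : x ≠ 0 := by
      rintro rfl
      rw [hy0] at h0
      exact one_ne_zero h0
    have hxI : x ∈ Ioc (0:ℝ) 1 := ⟨lt_of_le_of_ne hx.1 (Ne.symm hx0), hx.2⟩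
    have h1 : ((starRingEnd ℂ) (y x) * y' x).im = 0 := by rw [h0]; simp
    rw [imW x hx] at h1
    rcases mul_eq_zero.mp h1 with h | h
    · exact hz (neg_eq_zero.mp h)
    · exact (ne_of_gt (hρpos x hxI)) h
  -- the ratio formula
  have hratio : ∀ x ∈ Ioc (0:ℝ) 1,
      (y' x / y x).im = -(z^2).im * ρ x / Complex.normSq (y x) := by
    intro x hx
    have hxIcc : x ∈ Icc (0:ℝ) 1 := ⟨hx.1.le, hx.2⟩
    have hyne := part1 x hxIcc
    have hcne : (starRingEnd ℂ) (y x) ≠ 0 := by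
      intro h
      apply hyne
      have := congrArg (starRingEnd ℂ) h
      simpa using this
    have hrw : y' x / y x
        = ((starRingEnd ℂ) (y x) * y' x) / ((Complex.normSq (y x) : ℝ) : ℂ) := by
      calc y' x / y x
          = (y' x * (starRingEnd ℂ) (y x)) / (y x * (starRingEnd ℂ) (y x)) :=
            (mul_div_mul_right _ _ hcne).symm
        _ = ((starRingEnd ℂ) (y x) * y' x) / ((Complex.normSq (y x) : ℝ) : ℂ) := by
            rw [Complex.mul_conj, mul_comm]
    rw [hrw, Complex.div_ofReal_im, imW x hxIcc]
  -- part (ii)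
  have part2 : ∀ x ∈ Ioc (0:ℝ) 1, (y' x / y x).im ≠ 0 := by
    intro x hx
    rw [hratio x hx]
    apply div_ne_zero
    · exact mul_ne_zero (neg_ne_zero.mpr hz) (ne_of_gt (hρpos x hx))
    · exact ne_of_gt (Complex.normSq_pos.mpr (part1 x ⟨hx.1.le, hx.2⟩))
  refine ⟨part1, part2, ?_⟩
  intro ξ hξ
  -- the logarithmic primitive L
  set q : ℝ → ℂ := fun s => y' s / y s with hqdef
  have hqc : ContinuousOn q (Icc 0 1) := hy'c.div hc part1
  have hqint : ∀ {a b : ℝ}, a ∈ Icc (0:ℝ) 1 → b ∈ Icc (0:ℝ) 1 →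
      IntervalIntegrable q volume a b :=
    fun ha hb => ((hqc.mono (huIcc ha hb))).intervalIntegrable
  set L : ℝ → ℂ := fun u => ∫ s in (0:ℝ)..u, q s with hLdef
  have hLd : ∀ x ∈ Icc (0:ℝ) 1, HasDerivWithinAt L (q x) (Icc 0 1) x := by
    intro x hx
    haveI : Fact (x ∈ Icc (0:ℝ) 1) := ⟨hx⟩
    exact intervalIntegral.integral_hasDerivWithinAt_right (hqint h01 hx)
      (hqc.stronglyMeasurableAtFilter_nhdsWithin measurableSet_Icc x)
      (hqc x hx)
  have hyd : ∀ x ∈ Icc (0:ℝ) 1, HasDerivWithinAt y (y' x) (Icc 0 1) x := by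
    intro x hx
    haveI : Fact (x ∈ Icc (0:ℝ) 1) := ⟨hx⟩
    have h1 : HasDerivWithinAt (fun u => 1 + ∫ s in (0:ℝ)..u, y' s) (y' x) (Icc 0 1) x :=
      (intervalIntegral.integral_hasDerivWithinAt_right (hy'int h01 hx)
        (hy'c.stronglyMeasurableAtFilter_nhdsWithin measurableSet_Icc x)
        (hy'c x hx)).const_add 1
    exact h1.congr (fun u hu => hif u hu) (hif x hx)
  -- y = exp L
  have hexp : ∀ x ∈ Icc (0:ℝ) 1, y x = Complex.exp (L x) := by
    set h : ℝ → ℂ := fun u => Complex.exp (-L u) * y u with hhdef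
    have hhd : ∀ x ∈ Icc (0:ℝ) 1, HasDerivWithinAt h 0 (Icc 0 1) x := by
      intro x hx
      have h1 : HasDerivWithinAt (fun u => Complex.exp (-L u))
          (Complex.exp (-L x) * (-q x)) (Icc 0 1) x := ((hLd x hx).neg).cexp
      have h2 := h1.mul (hyd x hx)
      have h3 : Complex.exp (-L x) * -q x * y x + Complex.exp (-L x) * y' x = 0 := by
        have h4 : q x * y x = y' x := div_mul_cancel₀ _ (part1 x hx)
        rw [← h4]
        ring
      rw [← h3]
      exact h2
    have hdiffOn : DifferentiableOn ℝ h (Icc 0 1) :=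
      fun u hu => ((hhd u hu).differentiableWithinAt)
    have hconst := constant_of_derivWithin_zero hdiffOn (fun u hu =>
      ((hhd u ⟨hu.1, hu.2.le⟩).derivWithin ((uniqueDiffOn_Icc one_pos) u ⟨hu.1, hu.2.le⟩)))
    intro x hx
    have hL0 : L 0 = 0 := by
      rw [hLdef]
      simp
    have h0 : h 0 = 1 := by
      rw [hhdef]
      show Complex.exp (-L 0) * y 0 = 1
      rw [hL0, hy0]
      simp
    have hcx := hconst x hx
    rw [h0] at hcx
    have h3 : Complex.exp (L x) * (Complex.exp (-L x) * y x) = y x := by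
      rw [← mul_assoc, ← Complex.exp_add]
      simp
    rw [show Complex.exp (-L x) * y x = h x from rfl] at h3
    rw [hcx, mul_one] at h3
    exact h3.symm
  -- imaginary part of L as a real integral
  have hqimc : ContinuousOn (fun s => (q s).im) (Icc 0 1) :=
    Complex.continuous_im.comp_continuousOn hqc
  have hqimint : ∀ {a b : ℝ}, a ∈ Icc (0:ℝ) 1 → b ∈ Icc (0:ℝ) 1 →
      IntervalIntegrable (fun s => (q s).im) volume a b :=
    fun ha hb => ((hqimc.mono (huIcc ha hb))).intervalIntegrable
  have hLim : ∀ x ∈ Icc (0:ℝ) 1, (L x).im = ∫ s in (0:ℝ)..x, (q s).im := by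
    intro x hx
    have hqI : Integrable q (volume.restrict (Ioc (0:ℝ) x)) :=
      (intervalIntegrable_iff_integrableOn_Ioc_of_le hx.1).mp (hqint h01 hx)
    show (∫ s in (0:ℝ)..x, q s).im = ∫ s in (0:ℝ)..x, (q s).im
    rw [intervalIntegral.integral_of_le hx.1, intervalIntegral.integral_of_le hx.1]
    exact (integral_im hqI).symm
  -- injectivity of Im ∘ L on [0,1]
  have hdiffIm : ∀ a b : ℝ, a ∈ Icc (0:ℝ) 1 → b ∈ Icc (0:ℝ) 1 → a ≤ b →
      (L b).im - (L a).im = ∫ s in a..b, (q s).im := by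
    intro a b ha hb hab
    rw [hLim a ha, hLim b hb]
    rw [← intervalIntegral.integral_interval_sub_left (hqimint h01 hb) (hqimint h01 ha)]
  have hsignval : ∀ a b : ℝ, a ∈ Icc (0:ℝ) 1 → b ∈ Icc (0:ℝ) 1 → a < b →
      (L b).im ≠ (L a).im := by
    intro a b ha hb hab
    have hIoosub : Ioo a b ⊆ Ioc (0:ℝ) 1 :=
      fun s hs => ⟨lt_of_le_of_lt ha.1 hs.1, (hs.2.trans_le hb.2).le⟩
    rcases lt_or_gt_of_ne hz with hzneg | hzpos
    · -- (z²).im < 0 : integrand positive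
      have hsign : ∀ s ∈ Ioo a b, 0 < (q s).im := by
        intro s hs
        have hsI := hIoosub hs
        rw [hqdef]
        show 0 < (y' s / y s).im
        rw [hratio s hsI]
        apply div_pos
        · exact mul_pos (by linarith) (hρpos s hsI)
        · exact Complex.normSq_pos.mpr (part1 s ⟨hsI.1.le, hsI.2⟩)
      have hpos' := intervalIntegral.intervalIntegral_pos_of_pos_on
        (hqimint ha hb) hsign hab
      rw [← hdiffIm a b ha hb hab.le] at hpos'
      intro hEq
      rw [hEq] at hpos'
      simp at hpos'
    · -- (z²).im > 0 : integrand negative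
      have hsign : ∀ s ∈ Ioo a b, 0 < -(q s).im := by
        intro s hs
        have hsI := hIoosub hs
        have : (q s).im < 0 := by
          rw [hqdef]
          show (y' s / y s).im < 0
          rw [hratio s hsI]
          apply div_neg_of_neg_of_pos
          · have := hρpos s hsI
            nlinarith
          · exact Complex.normSq_pos.mpr (part1 s ⟨hsI.1.le, hsI.2⟩)
        linarith
      have hnegint : IntervalIntegrable (fun s => -(q s).im) volume a b :=
        ((hqimc.mono (huIcc ha hb)).neg).intervalIntegrable
      have hpos' := intervalIntegral.intervalIntegral_pos_of_pos_on hnegint hsign hab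
      rw [intervalIntegral.integral_neg, ← hdiffIm a b ha hb hab.le] at hpos'
      intro hEq
      rw [hEq] at hpos'
      simp at hpos'
  have hInj : InjOn (fun u => (L u).im) (Icc 0 1) := by
    intro a ha b hb hEq
    by_contra hne
    rcases lt_or_gt_of_ne hne with h | h
    · exact hsignval a b ha hb h hEq.symm
    · exact hsignval b a hb ha h hEq
  -- boundedness of Im ∘ L
  have hLc : ContinuousOn L (Icc 0 1) :=
    fun u hu => ((hLd u hu).differentiableWithinAt).continuousWithinAt
  obtain ⟨M, hM⟩ := isCompact_Icc.exists_bound_of_continuousOn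
    (Complex.continuous_im.comp_continuousOn hLc)
  -- every ray point gives Im L ∈ ξ + 2πℤ
  have hSn : ∀ x, x ∈ Icc (0:ℝ) 1 → (∃ t : ℝ, 0 < t ∧
      y x = Complex.exp ((ξ : ℂ) * Complex.I) * (t : ℂ)) →
      ∃ n : ℤ, (L x).im = ξ + n * (2 * Real.pi) := by
    intro x hxI ⟨t, ht, hyx⟩
    have h1 : Complex.exp (L x) = Complex.exp ((ξ:ℂ) * Complex.I + (Real.log t : ℂ)) := by
      rw [← hexp x hxI, hyx, Complex.exp_add]
      congr 1
      rw [← Complex.ofReal_exp, Real.exp_log ht]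
    have h2 : Complex.exp (L x - ((ξ:ℂ) * Complex.I + (Real.log t : ℂ))) = 1 := by
      rw [Complex.exp_sub, h1, div_self (Complex.exp_ne_zero _)]
    obtain ⟨n, hn⟩ := Complex.exp_eq_one_iff.mp h2
    refine ⟨n, ?_⟩
    have him := congrArg Complex.im hn
    simp only [Complex.sub_im, Complex.add_im, Complex.mul_im, Complex.mul_re,
      Complex.ofReal_im, Complex.ofReal_re, Complex.I_im, Complex.I_re,
      Complex.intCast_im, Complex.intCast_re, Complex.re_ofNat, Complex.im_ofNat,
      mul_zero, mul_one, zero_mul, add_zero, zero_add, sub_zero] at him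
    push_cast at him
    linarith
  -- the set of admissible integers is finite
  have hπ : (0:ℝ) < 2 * Real.pi := by positivity
  have hTfin : Set.Finite {n : ℤ | |ξ + (n:ℝ) * (2*Real.pi)| ≤ M} := by
    apply Set.Finite.subset (Set.finite_Icc (⌈(-M - ξ)/(2*Real.pi)⌉) (⌊(M - ξ)/(2*Real.pi)⌋))
    intro n hn
    rw [mem_setOf_eq, abs_le] at hn
    constructor
    · rw [Int.ceil_le, div_le_iff₀ hπ]
      linarith [hn.1]
    · rw [Int.le_floor, le_div_iff₀ hπ]
      linarith [hn.2]
  refine Set.Finite.subset (Set.Finite.biUnion hTfin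
    (t := fun n => {x ∈ Icc (0:ℝ) 1 | (L x).im = ξ + (n:ℝ) * (2*Real.pi)})
    (fun n _ => Set.Subsingleton.finite (fun x hx x' hx' =>
      hInj hx.1 hx'.1 (by
        show (L x).im = (L x').im
        rw [hx.2, hx'.2])))) ?_
  intro x hx
  obtain ⟨hxI, t, ht, hyx⟩ := hx
  obtain ⟨n, hn⟩ := hSn x hxI ⟨t, ht, hyx⟩
  apply mem_biUnion
  · rw [mem_setOf_eq, ← hn]
    have := hM x hxI
    simpa [Real.norm_eq_abs] using this
  · exact ⟨hxI, hn⟩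
end
end
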